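/- arXiv:2106.01822 — 9 statements merged into one kernel-verified Lean document; each statement's English description precedes it below -/
import Mathlib

section
/- Smoothness implies a coarse correlated welfare bound: Let n, k ≥ 1, γ ∈ [0,1], λ > 0, μ ≥ 0. Let B := Fin n → (Fin k → ℝ≥0) be the space of bid profiles, and for b ∈ B let W(b) denote the sum of the k largest values among the n·k marginal bids of b. Suppose given functions u_i : B → ℝ and p_i : B → ℝ for i ∈ Fin n with p_i(b) ≥ 0 and ∑_i p_i(b) ≥ γ·W(b) for all b; a real number OPT; define SW(b) := ∑_i u_i(b) + ∑_i p_i(b). Suppose for each i there is a probability measure σ'_i on Fin k → ℝ≥0 such that for every b ∈ B: ∑_i E_{b'_i ∼ σ'_i}[u_i(b'_i, b_{−i})] ≥ λ·OPT − μ·W(b). Let σ be a probability measure on B (with all the functions u_i, p_i, SW, W and the deviation integrands σ-integrable) satisfying the coarse correlated equilibrium condition: for every i and every fixed b'_i ∈ (Fin k → ℝ≥0), E_{b∼σ}[u_i(b)] ≥ E_{b∼σ}[u_i(b'_i, b_{−i})]. Then: (1) if μ ≤ γ, E_{b∼σ}[SW(b)] ≥ λ·OPT; (2) if μ > γ and additionally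 W(b) ≤ SW(b) for all b, then E_{b∼σ}[SW(b)] ≥ (λ/(1+μ−γ))·OPT. -/
open MeasureTheory
open scoped NNReal

/-- Smoothness implies a coarse correlated welfare bound for γ-approximate first-price
multi-unit auctions.  Here bid profiles are `b : Fin n → Fin k → ℝ≥0`, `W b` is the sum
of the `k` largest marginal bids of `b` (characterized as the greatest sum over a
size-`k` set of bid indices), `u i`/`p i` are utilities/payments, `SW = ∑ u + ∑ p`,
`σ' i` are the randomized smoothness deviations, and `σ` is a coarse correlated
equilibrium.  If `μ ≤ γ` then `E[SW] ≥ λ·OPT`; if `μ > γ` and additionally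
`W b ≤ SW b` for all `b` (no overbidding) then `E[SW] ≥ (λ/(1+μ-γ))·OPT`. -/
theorem smoothness_implies_cce_welfare_bound
    (n k : ℕ) (hn : 1 ≤ n) (hk : 1 ≤ k)
    (γ lam mu : ℝ) (hγ0 : 0 ≤ γ) (hγ1 : γ ≤ 1) (hlam : 0 < lam) (hmu : 0 ≤ mu)
    (W : (Fin n → Fin k → ℝ≥0) → ℝ)
    (hW : ∀ b, IsGreatest {s : ℝ | ∃ S : Finset (Fin n × Fin k),
      S.card = k ∧ s = ∑ q ∈ S, (b q.1 q.2 : ℝ)} (W b))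
    (u p : Fin n → (Fin n → Fin k → ℝ≥0) → ℝ)
    (hp : ∀ i b, 0 ≤ p i b)
    (hFPA : ∀ b, γ * W b ≤ ∑ i, p i b)
    (OPT : ℝ)
    (SW : (Fin n → Fin k → ℝ≥0) → ℝ)
    (hSW : ∀ b, SW b = ∑ i, u i b + ∑ i, p i b)
    (σ' : Fin n → Measure (Fin k → ℝ≥0))
    (hσ' : ∀ i, IsProbabilityMeasure (σ' i))
    (hsmooth : ∀ b, lam * OPT - mu * W b ≤
      ∑ i, ∫ b', u i (Function.update b i b') ∂(σ' i))
    (σ : Measure (Fin n → Fin k → ℝ≥0)) [IsProbabilityMeasure σ]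
    (hIntu : ∀ i, Integrable (u i) σ) (hIntp : ∀ i, Integrable (p i) σ)
    (hIntSW : Integrable SW σ) (hIntW : Integrable W σ)
    (hIntdev : ∀ i, Integrable (fun q : (Fin n → Fin k → ℝ≥0) × (Fin k → ℝ≥0) =>
        u i (Function.update q.1 i q.2)) (σ.prod (σ' i)))
    (hCCE : ∀ i (b' : Fin k → ℝ≥0),
      ∫ b, u i (Function.update b i b') ∂σ ≤ ∫ b, u i b ∂σ) :
    (mu ≤ γ → lam * OPT ≤ ∫ b, SW b ∂σ) ∧
    (γ < mu → (∀ b, W b ≤ SW b) →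
      (lam / (1 + mu - γ)) * OPT ≤ ∫ b, SW b ∂σ) := by

  have hW0 : ∀ b, 0 ≤ W b := by
    intro b
    obtain ⟨S, hS, hs⟩ := (hW b).1
    rw [hs]
    positivity
  set g : Fin n → (Fin n → Fin k → ℝ≥0) → ℝ :=
    fun i b => ∫ b', u i (Function.update b i b') ∂(σ' i) with hg
  have hIntg : ∀ i, Integrable (g i) σ := fun i => (hIntdev i).integral_prod_left
  have _ := fun i => hσ' i
  have hgle : ∀ i, ∫ b, g i b ∂σ ≤ ∫ b, u i b ∂σ := by
    intro i
    have := hσ' i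
    have hswap : ∫ b, g i b ∂σ
        = ∫ b', ∫ b, u i (Function.update b i b') ∂σ ∂(σ' i) :=
      integral_integral_swap (hIntdev i)
    rw [hswap]
    have h1 : Integrable (fun b' => ∫ b, u i (Function.update b i b') ∂σ) (σ' i) :=
      (hIntdev i).integral_prod_right
    calc ∫ b', ∫ b, u i (Function.update b i b') ∂σ ∂(σ' i)
        ≤ ∫ _b', ∫ b, u i b ∂σ ∂(σ' i) :=
          integral_mono h1 (integrable_const _) (fun b' => hCCE i b')
      _ = ∫ b, u i b ∂σ := by simp
  have hIntsumg : Integrable (fun b => ∑ i, g i b) σ :=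
    integrable_finset_sum _ fun i _ => hIntg i
  have hsum : lam * OPT - mu * ∫ b, W b ∂σ ≤ ∑ i, ∫ b, u i b ∂σ := by
    have h1 : ∫ b, (lam * OPT - mu * W b) ∂σ ≤ ∫ b, ∑ i, g i b ∂σ :=
      integral_mono (by exact (integrable_const _).sub (hIntW.const_mul mu)) hIntsumg hsmooth
    have h2 : ∫ b, (lam * OPT - mu * W b) ∂σ = lam * OPT - mu * ∫ b, W b ∂σ := by
      rw [integral_sub (integrable_const _) (hIntW.const_mul mu), integral_const,
        integral_const_mul]
      simp
    have h3 : ∫ b, ∑ i, g i b ∂σ = ∑ i, ∫ b, g i b ∂σ :=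
      integral_finset_sum _ fun i _ => hIntg i
    calc lam * OPT - mu * ∫ b, W b ∂σ = ∫ b, (lam * OPT - mu * W b) ∂σ := h2.symm
      _ ≤ ∑ i, ∫ b, g i b ∂σ := by rw [← h3]; exact h1
      _ ≤ ∑ i, ∫ b, u i b ∂σ := Finset.sum_le_sum fun i _ => hgle i
  have hpay : γ * ∫ b, W b ∂σ ≤ ∑ i, ∫ b, p i b ∂σ := by
    have h1 : ∫ b, γ * W b ∂σ ≤ ∫ b, ∑ i, p i b ∂σ :=
      integral_mono (hIntW.const_mul γ) (integrable_finset_sum _ fun i _ => hIntp i) hFPA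
    rwa [integral_const_mul, integral_finset_sum _ fun i _ => hIntp i] at h1
  have hSWint : ∫ b, SW b ∂σ = ∑ i, ∫ b, u i b ∂σ + ∑ i, ∫ b, p i b ∂σ := by
    have : ∫ b, SW b ∂σ = ∫ b, (∑ i, u i b + ∑ i, p i b) ∂σ := by
      apply integral_congr_ae
      filter_upwards with b using hSW b
    rw [this, integral_add (integrable_finset_sum _ fun i _ => hIntu i)
      (integrable_finset_sum _ fun i _ => hIntp i),
      integral_finset_sum _ fun i _ => hIntu i, integral_finset_sum _ fun i _ => hIntp i]
  have hkey : lam * OPT - mu * ∫ b, W b ∂σ + γ * ∫ b, W b ∂σ ≤ ∫ b, SW b ∂σ := by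
    rw [hSWint]; exact add_le_add hsum hpay
  have hWnn : 0 ≤ ∫ b, W b ∂σ := integral_nonneg hW0
  constructor
  · intro hle
    have : 0 ≤ (γ - mu) * ∫ b, W b ∂σ := mul_nonneg (by linarith) hWnn
    nlinarith [hkey]
  · intro hlt hWSW
    have hWSWint : ∫ b, W b ∂σ ≤ ∫ b, SW b ∂σ := integral_mono hIntW hIntSW hWSW
    have hpos : (0:ℝ) < 1 + mu - γ := by linarith
    rw [div_mul_eq_mul_div, div_le_iff₀ hpos]
    nlinarith [hkey, hWSWint]
end

section
/- Coarse correlated price of anarchy of single-item γ-FPA with overbidding: Let γ ∈ (0,1], let n ≥ 2, let v : Fin n → ℝ≥0 be valuations, and consider a single-item γ-approximate first-price auction. Let μ be any coarse correlated equilibrium (overbidding allowed) with all utilities, payments and SW μ-integrable. Then max_i v_i ≤ (1/(γ·(1 − e^{−1/γ})))·E_{b∼μ}[SW(b)]. -/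
/-!
Let `i` be a bidder of highest value `V` and `B` the highest competing bid. Deviating to a fixed
bid `x ≤ V` wins whenever `B < x` and then costs at most `x`, so the equilibrium condition gives
`(V - x) · P(B < x) ≤ E[u_i]`. Divide by `V - x` and integrate over `x ∈ (0, T]` with
`T = (1 - e^{-1/γ}) V`, the threshold at which `∫₀ᵀ dx / (V - x) = 1/γ`; since
`∫₀ᵀ P(B < x) dx ≥ T - E[B]`, this yields `γ (T - E[B]) ≤ E[u_i]`. All equilibrium utilities are
nonnegative (bidding `0` is a deviation), so `E[u_i] ≤ E[SW] - E[p]`, and `E[p] ≥ γ E[B]` because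
the winner pays at least `γ` times the top bid, which is at least `B`. Hence `γ T ≤ E[SW]`.
-/

open MeasureTheory Set
open scoped NNReal

theorem sub_integral_le_setIntegral_measureReal_lt {Ω : Type*} [MeasurableSpace Ω]
    {μ : Measure Ω} [IsProbabilityMeasure μ] {B : Ω → ℝ} (hBm : Measurable B)
    (hBi : Integrable B μ) (hB0 : ∀ ω, 0 ≤ B ω) (T : ℝ) :
    T - ∫ ω, B ω ∂μ ≤ ∫ x in Ioc 0 T, μ.real {ω | B ω < x} := by
  set F : ℝ → Ω → ℝ := fun x ω => if B ω < x then 1 else 0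
  have hF : Integrable (Function.uncurry F) ((volume.restrict (Ioc 0 T)).prod μ) := by
    have hS : MeasurableSet {q : ℝ × Ω | B q.2 < q.1} :=
      measurableSet_lt (hBm.comp measurable_snd) measurable_fst
    exact (integrable_const (1 : ℝ)).indicator hS
  calc T - ∫ ω, B ω ∂μ = ∫ ω, (T - B ω) ∂μ := by
        rw [integral_sub (integrable_const T) hBi, integral_const, probReal_univ, one_smul]
    _ ≤ ∫ ω, (∫ x in Ioc 0 T, F x ω) ∂μ := by
        refine integral_mono ((integrable_const T).sub hBi) hF.integral_prod_right fun ω => ?_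
        have hslice : (fun x => F x ω) = (Ioi (B ω)).indicator 1 := by
          ext x; simp [F, indicator_apply]
        rw [hslice, integral_indicator_one measurableSet_Ioi, measureReal_restrict_apply
          measurableSet_Ioi, inter_comm, Ioc_inter_Ioi, max_eq_right (hB0 ω), Real.volume_real_Ioc]
        exact le_max_left _ _
    _ = ∫ x in Ioc 0 T, ∫ ω, F x ω ∂μ := (integral_integral_swap hF).symm
    _ = ∫ x in Ioc 0 T, μ.real {ω | B ω < x} := by
        congr 1 with x
        have hslice : F x = {ω | B ω < x}.indicator 1 := by
          ext ω; simp [F, indicator_apply]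
        rw [hslice, integral_indicator_one (measurableSet_lt hBm measurable_const)]

theorem setIntegral_Ioc_le_mul_log {g : ℝ → ℝ} {U V T : ℝ} (hT : 0 ≤ T) (hTV : T < V)
    (hg : IntegrableOn g (Ioc 0 T)) (hgU : ∀ x ∈ Ioc 0 T, (V - x) * g x ≤ U) :
    ∫ x in Ioc 0 T, g x ≤ U * Real.log (V / (V - T)) := by
  have hpos : ∀ x ∈ Icc 0 T, 0 < V - x := fun x hx => by linarith [hx.2]
  have hcont : ContinuousOn (fun x => U * (V - x)⁻¹) (Icc 0 T) :=
    continuousOn_const.mul <|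
      (continuousOn_const.sub continuousOn_id).inv₀ fun x hx => (hpos x hx).ne'
  calc ∫ x in Ioc 0 T, g x ≤ ∫ x in Ioc 0 T, U * (V - x)⁻¹ := by
        refine setIntegral_mono_on hg (hcont.integrableOn_Icc.mono_set Ioc_subset_Icc_self)
          measurableSet_Ioc fun x hx => ?_
        rw [← div_eq_mul_inv, le_div_iff₀' (hpos x (Ioc_subset_Icc_self hx))]
        exact hgU x hx
    _ = U * ∫ x in (0)..T, (V - x)⁻¹ := by
        rw [integral_const_mul, intervalIntegral.integral_of_le hT]
    _ = U * Real.log (V / (V - T)) := by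
        rw [intervalIntegral.integral_comp_sub_left (fun x => x⁻¹), integral_inv, sub_zero]
        rw [uIcc_of_le (by linarith)]
        exact fun h => (hpos T ⟨hT, le_rfl⟩).ne' (by linarith [h.1])

section Auction

variable {ι : Type*} [DecidableEq ι] {μ : Measure (ι → ℝ≥0)} {v : ι → ℝ≥0}
  {w : (ι → ℝ≥0) → ι} {p : (ι → ℝ≥0) → ℝ} {u : ι → (ι → ℝ≥0) → ℝ}

theorem utility_nonneg_of_bid_le_value (hp : ∀ b, p b ≤ b (w b))
    (hu : ∀ i b, u i b = if i = w b then (v (w b) : ℝ) - p b else 0) {i : ι} {b : ι → ℝ≥0}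
    (hbi : b i ≤ v i) : 0 ≤ u i b := by
  rw [hu]
  split_ifs with hi
  · subst hi
    linarith [hp b, (NNReal.coe_le_coe.2 hbi : (b (w b) : ℝ) ≤ v (w b))]
  · exact le_rfl

theorem value_sub_bid_le_utility_of_forall_lt (hw : ∀ (b : ι → ℝ≥0) j, b j ≤ b (w b))
    (hp : ∀ b, p b ≤ b (w b))
    (hu : ∀ i b, u i b = if i = w b then (v (w b) : ℝ) - p b else 0) {i : ι} {b : ι → ℝ≥0}
    (hlt : ∀ j ≠ i, b j < b i) : (v i : ℝ) - b i ≤ u i b := by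
  have hwin : w b = i := by
    by_contra hne
    exact (hw b i).not_gt (hlt _ hne)
  have hpay := hp b
  rw [hwin] at hpay
  rw [hu, if_pos hwin.symm, hwin]
  linarith

theorem integral_utility_nonneg (hp : ∀ b, p b ≤ b (w b))
    (hu : ∀ i b, u i b = if i = w b then (v (w b) : ℝ) - p b else 0) {i : ι}
    (hCCE : ∫ b, u i (Function.update b i 0) ∂μ ≤ ∫ b, u i b ∂μ) : 0 ≤ ∫ b, u i b ∂μ :=
  (integral_nonneg fun _ => utility_nonneg_of_bid_le_value hp hu (by simp)).trans hCCE

variable [Fintype ι]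

def maxOtherBid (i : ι) (b : ι → ℝ≥0) : ℝ≥0 := (Finset.univ.erase i).sup b

theorem le_maxOtherBid {i j : ι} (hj : j ≠ i) (b : ι → ℝ≥0) : b j ≤ maxOtherBid i b :=
  Finset.le_sup (Finset.mem_erase.2 ⟨hj, Finset.mem_univ j⟩)

theorem measurable_maxOtherBid (i : ι) : Measurable (maxOtherBid i) := by
  have h : maxOtherBid i = (Finset.univ.erase i).sup fun j (b : ι → ℝ≥0) => b j := by
    ext b
    simp only [maxOtherBid, Finset.sup_apply]
  rw [h]
  exact Finset.sup_induction measurable_const (fun _ hf _ hg => hf.sup hg)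
    fun j _ => measurable_pi_apply j

theorem mul_maxOtherBid_le_payment {γ : ℝ} (hγ : 0 ≤ γ) (hw : ∀ (b : ι → ℝ≥0) j, b j ≤ b (w b))
    (hp : ∀ b, γ * b (w b) ≤ p b) (i : ι) (b : ι → ℝ≥0) : γ * maxOtherBid i b ≤ p b :=
  (mul_le_mul_of_nonneg_left (NNReal.coe_le_coe.2 (Finset.sup_le fun j _ => hw b j)) hγ).trans
    (hp b)

theorem integrable_maxOtherBid {γ : ℝ} (hγ : 0 < γ) (hw : ∀ (b : ι → ℝ≥0) j, b j ≤ b (w b))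
    (hp : ∀ b, γ * b (w b) ≤ p b) (hIntp : Integrable p μ) (i : ι) :
    Integrable (fun b => (maxOtherBid i b : ℝ)) μ := by
  refine (hIntp.const_mul γ⁻¹).mono'
    (measurable_maxOtherBid i).coe_nnreal_real.aestronglyMeasurable
    (Filter.Eventually.of_forall fun b => ?_)
  rw [Real.norm_of_nonneg (NNReal.coe_nonneg _), inv_mul_eq_div, le_div_iff₀' hγ]
  exact mul_maxOtherBid_le_payment hγ.le hw hp i b

theorem mul_integral_maxOtherBid_le_integral_payment {γ : ℝ} (hγ : 0 < γ)
    (hw : ∀ (b : ι → ℝ≥0) j, b j ≤ b (w b)) (hp : ∀ b, γ * b (w b) ≤ p b)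
    (hIntp : Integrable p μ) (i : ι) :
    γ * ∫ b, (maxOtherBid i b : ℝ) ∂μ ≤ ∫ b, p b ∂μ := by
  rw [← integral_const_mul]
  exact integral_mono ((integrable_maxOtherBid hγ hw hp hIntp i).const_mul γ) hIntp
    (mul_maxOtherBid_le_payment hγ.le hw hp i)

theorem integral_utility_le_integral_welfare_sub_integral_payment (hp : ∀ b, p b ≤ b (w b))
    (hu : ∀ i b, u i b = if i = w b then (v (w b) : ℝ) - p b else 0)
    (hIntu : ∀ i, Integrable (u i) μ) (hIntp : Integrable p μ)
    (hIntSW : Integrable (fun b => (v (w b) : ℝ)) μ)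
    (hCCE : ∀ i, ∫ b, u i (Function.update b i 0) ∂μ ≤ ∫ b, u i b ∂μ) (i : ι) :
    ∫ b, u i b ∂μ ≤ ∫ b, (v (w b) : ℝ) ∂μ - ∫ b, p b ∂μ := by
  calc ∫ b, u i b ∂μ ≤ ∑ j, ∫ b, u j b ∂μ :=
        Finset.single_le_sum (fun j _ => integral_utility_nonneg hp hu (hCCE j))
          (Finset.mem_univ i)
    _ = ∫ b, ∑ j, u j b ∂μ := (integral_finsetSum _ fun j _ => hIntu j).symm
    _ = ∫ b, ((v (w b) : ℝ) - p b) ∂μ := by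
        congr 1 with b
        simp [hu]
    _ = ∫ b, (v (w b) : ℝ) ∂μ - ∫ b, p b ∂μ := integral_sub hIntSW hIntp

theorem mul_measureReal_maxOtherBid_lt_le_integral_utility_update [IsFiniteMeasure μ]
    (hw : ∀ (b : ι → ℝ≥0) j, b j ≤ b (w b)) (hp : ∀ b, p b ≤ b (w b))
    (hu : ∀ i b, u i b = if i = w b then (v (w b) : ℝ) - p b else 0) {i : ι} {x : ℝ≥0}
    (hx : x ≤ v i) (hint : Integrable (fun b => u i (Function.update b i x)) μ) :
    ((v i : ℝ) - x) * μ.real {b | (maxOtherBid i b : ℝ) < x}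
      ≤ ∫ b, u i (Function.update b i x) ∂μ := by
  set S := {b | (maxOtherBid i b : ℝ) < x}
  have hS : MeasurableSet S :=
    measurableSet_lt (measurable_maxOtherBid i).coe_nnreal_real measurable_const
  rw [mul_comm, ← smul_eq_mul, ← integral_indicator_const _ hS]
  refine integral_mono ((integrable_const _).indicator hS) hint fun b => ?_
  by_cases hb : b ∈ S
  · rw [indicator_of_mem hb]
    have hwin : ∀ j ≠ i, Function.update b i x j < Function.update b i x i := fun j hj => by
      rw [Function.update_of_ne hj, Function.update_self]
      exact (le_maxOtherBid hj b).trans_lt (NNReal.coe_lt_coe.1 hb)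
    simpa using value_sub_bid_le_utility_of_forall_lt hw hp hu hwin
  · rw [indicator_of_notMem hb]
    exact utility_nonneg_of_bid_le_value hp hu (by simpa using hx)

theorem one_sub_exp_mul_value_sub_integral_maxOtherBid_le [IsProbabilityMeasure μ]
    (hw : ∀ (b : ι → ℝ≥0) j, b j ≤ b (w b))
    (hp : ∀ b, p b ≤ b (w b)) (hu : ∀ i b, u i b = if i = w b then (v (w b) : ℝ) - p b else 0)
    {i : ι} (hv : 0 < v i) (hIntB : Integrable (fun b => (maxOtherBid i b : ℝ)) μ)
    (hIntdev : ∀ x : ℝ≥0, Integrable (fun b => u i (Function.update b i x)) μ)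
    (hCCE : ∀ x : ℝ≥0, ∫ b, u i (Function.update b i x) ∂μ ≤ ∫ b, u i b ∂μ)
    {a : ℝ} (ha : 0 ≤ a) :
    (1 - Real.exp (-a)) * v i - ∫ b, (maxOtherBid i b : ℝ) ∂μ ≤ a * ∫ b, u i b ∂μ := by
  set T := (1 - Real.exp (-a)) * v i
  have hexp : Real.exp (-a) ≤ 1 := Real.exp_le_one_iff.2 (neg_nonpos.2 ha)
  have hT0 : 0 ≤ T := mul_nonneg (sub_nonneg.2 hexp) (NNReal.coe_nonneg _)
  have hvT : (v i : ℝ) - T = Real.exp (-a) * v i := by ring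
  have hTv : T < v i := by nlinarith [Real.exp_pos (-a)]
  have hlog : Real.log (v i / (v i - T)) = a := by
    rw [hvT, div_mul_cancel_right₀ (NNReal.coe_pos.2 hv).ne', Real.exp_neg, inv_inv, Real.log_exp]
  have hmono : Monotone fun x : ℝ => μ.real {b | (maxOtherBid i b : ℝ) < x} :=
    fun _ _ hxy => measureReal_mono fun _ hb => lt_of_lt_of_le hb hxy
  calc T - ∫ b, (maxOtherBid i b : ℝ) ∂μ
      ≤ ∫ x in Ioc 0 T, μ.real {b | (maxOtherBid i b : ℝ) < x} :=
        sub_integral_le_setIntegral_measureReal_lt (measurable_maxOtherBid i).coe_nnreal_real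
          hIntB (fun b => NNReal.coe_nonneg _) T
    _ ≤ (∫ b, u i b ∂μ) * Real.log (v i / (v i - T)) := by
        refine setIntegral_Ioc_le_mul_log hT0 hTv
          ((hmono.locallyIntegrable.integrableOn_isCompact isCompact_Icc).mono_set
            Ioc_subset_Icc_self) fun x hx => ?_
        lift x to ℝ≥0 using hx.1.le
        have hxv : x ≤ v i := NNReal.coe_le_coe.1 (hx.2.trans hTv.le)
        exact (mul_measureReal_maxOtherBid_lt_le_integral_utility_update hw hp hu hxv
          (hIntdev x)).trans (hCCE x)
    _ = a * ∫ b, u i b ∂μ := by rw [hlog, mul_comm]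

end Auction

theorem cce_poa_single_item_FPA_overbidding_general
    (γ : ℝ) (hγ0 : 0 < γ) (n : ℕ)
    (v : Fin n → ℝ≥0)
    (w : (Fin n → ℝ≥0) → Fin n)
    (hw : ∀ b, (∀ i, b i ≤ b (w b)) ∧ ∀ i, b i = b (w b) → w b ≤ i)
    (p : (Fin n → ℝ≥0) → ℝ)
    (hp : ∀ b, γ * (b (w b) : ℝ) ≤ p b ∧ p b ≤ (b (w b) : ℝ))
    (u : Fin n → (Fin n → ℝ≥0) → ℝ)
    (hu : ∀ i b, u i b = if i = w b then (v (w b) : ℝ) - p b else 0)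
    (μ : Measure (Fin n → ℝ≥0)) [IsProbabilityMeasure μ]
    (hIntu : ∀ i, Integrable (u i) μ) (hIntp : Integrable p μ)
    (hIntSW : Integrable (fun b => (v (w b) : ℝ)) μ)
    (hIntdev : ∀ i (b' : ℝ≥0), Integrable (fun b => u i (Function.update b i b')) μ)
    (hCCE : ∀ i (b' : ℝ≥0),
      ∫ b, u i (Function.update b i b') ∂μ ≤ ∫ b, u i b ∂μ) :
    ((Finset.univ.sup v : ℝ≥0) : ℝ)
      ≤ (1 / (γ * (1 - Real.exp (-1/γ)))) * ∫ b, (v (w b) : ℝ) ∂μ := by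
  have hw' : ∀ (b : Fin n → ℝ≥0) i, b i ≤ b (w b) := fun b => (hw b).1
  have hp_ge : ∀ b, γ * (b (w b) : ℝ) ≤ p b := fun b => (hp b).1
  have hp_le : ∀ b, p b ≤ (b (w b) : ℝ) := fun b => (hp b).2
  have hc : 0 < γ * (1 - Real.exp (-1/γ)) :=
    mul_pos hγ0 (sub_pos.2 (Real.exp_lt_one_iff.2 (div_neg_of_neg_of_pos (by norm_num) hγ0)))
  rw [one_div, ← div_eq_inv_mul, le_div_iff₀' hc]
  rcases eq_zero_or_pos (Finset.univ.sup v) with hV | hV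
  · rw [hV, NNReal.coe_zero, mul_zero]
    exact integral_nonneg fun _ => NNReal.coe_nonneg _
  obtain ⟨i, -, hi⟩ := Finset.exists_mem_eq_sup _ ⟨w 0, Finset.mem_univ _⟩ v
  have hdev := one_sub_exp_mul_value_sub_integral_maxOtherBid_le hw' hp_le hu (hi ▸ hV)
    (integrable_maxOtherBid hγ0 hw' hp_ge hIntp i) (hIntdev i) (hCCE i) (one_div_nonneg.2 hγ0.le)
  have hpay := mul_integral_maxOtherBid_le_integral_payment hγ0 hw' hp_ge hIntp i
  have hwel := integral_utility_le_integral_welfare_sub_integral_payment hp_le hu hIntu hIntp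
    hIntSW (fun j => hCCE j 0) i
  have hscaled := mul_le_mul_of_nonneg_left hdev hγ0.le
  rw [← mul_assoc, mul_one_div_cancel hγ0.ne', one_mul] at hscaled
  rw [hi, neg_div]
  linarith

/-- Coarse correlated price of anarchy of the single-item γ-approximate first-price
auction with overbidding allowed: in any coarse correlated equilibrium `μ`, the optimal
welfare `max_i v_i` is at most `1/(γ(1 - e^{-1/γ}))` times the expected welfare.
Here `w b` is the highest bidder (ties to the smallest index), the winner pays some
`p b` with `γ·b_{w b} ≤ p b ≤ b_{w b}`, the winner's utility is `v_{w b} - p b` and all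
other utilities are `0`; `SW b = v_{w b}`. -/
theorem cce_poa_single_item_FPA_overbidding
    (γ : ℝ) (hγ0 : 0 < γ) (hγ1 : γ ≤ 1) (n : ℕ) (hn : 2 ≤ n)
    (v : Fin n → ℝ≥0)
    (w : (Fin n → ℝ≥0) → Fin n)
    (hw : ∀ b, (∀ i, b i ≤ b (w b)) ∧ ∀ i, b i = b (w b) → w b ≤ i)
    (p : (Fin n → ℝ≥0) → ℝ)
    (hp : ∀ b, γ * (b (w b) : ℝ) ≤ p b ∧ p b ≤ (b (w b) : ℝ))
    (u : Fin n → (Fin n → ℝ≥0) → ℝ)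
    (hu : ∀ i b, u i b = if i = w b then (v (w b) : ℝ) - p b else 0)
    (μ : Measure (Fin n → ℝ≥0)) [IsProbabilityMeasure μ]
    (hIntu : ∀ i, Integrable (u i) μ) (hIntp : Integrable p μ)
    (hIntSW : Integrable (fun b => (v (w b) : ℝ)) μ)
    (hIntdev : ∀ i (b' : ℝ≥0), Integrable (fun b => u i (Function.update b i b')) μ)
    (hCCE : ∀ i (b' : ℝ≥0),
      ∫ b, u i (Function.update b i b') ∂μ ≤ ∫ b, u i b ∂μ) :
    ((Finset.univ.sup v : ℝ≥0) : ℝ)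
      ≤ (1 / (γ * (1 - Real.exp (-1/γ)))) * ∫ b, (v (w b) : ℝ) ∂μ :=
  cce_poa_single_item_FPA_overbidding_general γ hγ0 n v w hw p hp u hu μ hIntu hIntp hIntSW hIntdev
    hCCE
end

section
/- Let γ ∈ (0,1], v > 0, and 0 < b ≤ (1−e^{−1/γ})·v. Then b·γ²·e^{−1/γ} − (1−γ)·γ·v·e^{−1/γ}·ln((v−b)/v) ≤ v·e^{−1/γ}. In particular, the left-hand side is nondecreasing in b on (0, (1−e^{−1/γ})v], its value at b = (1−e^{−1/γ})·v equals ((1−e^{−1/γ})·γ² + (1−γ))·v·e^{−1/γ}, and ((1−e^{−1/γ})·γ² + (1−γ)) ≤ 1 since γ·(1−e^{−1/γ}) ≤ 1. -/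
/-- The expected deviation utility `b·γ²·e^{-1/γ} - (1-γ)·γ·v·e^{-1/γ}·ln((v-b)/v)` of the
high-valuation bidder is at most the equilibrium utility `v·e^{-1/γ}` for every bid
`b ∈ (0, (1-e^{-1/γ})·v]`.  In particular, the deviation utility is nondecreasing in `b`
on this interval, its value at the right endpoint equals
`((1-e^{-1/γ})·γ² + (1-γ))·v·e^{-1/γ}`, and `(1-e^{-1/γ})·γ² + (1-γ) ≤ 1` since
`γ·(1-e^{-1/γ}) ≤ 1`. -/
theorem deviation_utility_le_equilibrium_utility
    (γ v b : ℝ) (hγ0 : 0 < γ) (hγ1 : γ ≤ 1) (hv : 0 < v)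
    (hb0 : 0 < b) (hb1 : b ≤ (1 - Real.exp (-1/γ)) * v) :
    b * γ^2 * Real.exp (-1/γ)
        - (1 - γ) * γ * v * Real.exp (-1/γ) * Real.log ((v - b)/v)
      ≤ v * Real.exp (-1/γ) ∧
    MonotoneOn (fun b : ℝ => b * γ^2 * Real.exp (-1/γ)
        - (1 - γ) * γ * v * Real.exp (-1/γ) * Real.log ((v - b)/v))
      (Set.Ioc 0 ((1 - Real.exp (-1/γ)) * v)) ∧
    ((1 - Real.exp (-1/γ)) * v) * γ^2 * Real.exp (-1/γ)
        - (1 - γ) * γ * v * Real.exp (-1/γ)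
            * Real.log ((v - (1 - Real.exp (-1/γ)) * v)/v)
      = ((1 - Real.exp (-1/γ)) * γ^2 + (1 - γ)) * (v * Real.exp (-1/γ)) ∧
    (1 - Real.exp (-1/γ)) * γ^2 + (1 - γ) ≤ 1 ∧
    γ * (1 - Real.exp (-1/γ)) ≤ 1 := by
  set E := Real.exp (-1/γ) with hEdef
  have hE0 : 0 < E := Real.exp_pos _
  have hE1 : E < 1 := by
    rw [hEdef]
    have h1γ : 0 < 1/γ := by positivity
    have : -1/γ < 0 := by rw [neg_div]; linarith
    simpa using Real.exp_lt_one_iff.mpr this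
  have hγ0' : (0:ℝ) ≤ 1 - γ := by linarith
  -- monotonicity
  have hmono : MonotoneOn (fun b : ℝ => b * γ^2 * E
        - (1 - γ) * γ * v * E * Real.log ((v - b)/v))
      (Set.Ioc 0 ((1 - E) * v)) := by
    intro x hx y hy hxy
    have hx0 : 0 < x := hx.1
    have hyv : y < v := by
      have := hy.2
      nlinarith
    have hlog : Real.log ((v - y)/v) ≤ Real.log ((v - x)/v) := by
      apply Real.log_le_log (div_pos (by linarith) hv)
      gcongr
    dsimp only
    have h1 : x * γ^2 * E ≤ y * γ^2 * E := by
      have := mul_nonneg (mul_nonneg (sub_nonneg.mpr hxy) (sq_nonneg γ)) hE0.le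
      nlinarith
    have hc : 0 ≤ (1 - γ) * γ * v * E := by positivity
    nlinarith [mul_le_mul_of_nonneg_left hlog hc]
  -- endpoint value
  have hveq : v - (1 - E) * v = E * v := by ring
  have hend : ((1 - E) * v) * γ^2 * E
        - (1 - γ) * γ * v * E * Real.log ((v - (1 - E) * v)/v)
      = ((1 - E) * γ^2 + (1 - γ)) * (v * E) := by
    rw [hveq]
    rw [mul_div_assoc, div_self hv.ne', mul_one, hEdef, Real.log_exp]
    field_simp
    ring
  -- coefficient bound
  have hcoef : (1 - E) * γ^2 + (1 - γ) ≤ 1 := by nlinarith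
  have hlast : γ * (1 - E) ≤ 1 := by nlinarith
  refine ⟨?_, hmono, hend, hcoef, hlast⟩
  have hmem : b ∈ Set.Ioc (0:ℝ) ((1 - E) * v) := ⟨hb0, hb1⟩
  have hmem' : (1 - E) * v ∈ Set.Ioc (0:ℝ) ((1 - E) * v) :=
    ⟨mul_pos (by linarith) hv, le_refl _⟩
  have := hmono hmem hmem' hb1
  simp only at this
  calc b * γ^2 * E - (1 - γ) * γ * v * E * Real.log ((v - b)/v)
      ≤ ((1 - E) * v) * γ^2 * E
        - (1 - γ) * γ * v * E * Real.log ((v - (1 - E) * v)/v) := this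
    _ = ((1 - E) * γ^2 + (1 - γ)) * (v * E) := hend
    _ ≤ 1 * (v * E) := by
        apply mul_le_mul_of_nonneg_right hcoef (by positivity)
    _ = v * E := one_mul _
end

section
/- Pure Nash equilibria of the multi-unit γ-hybrid auction without overbidding are efficient: Let γ ∈ (0,1), let there be k ≥ 1 identical items and n ≥ 2 bidders with nondecreasing submodular valuations v_i : {0,…,k} → ℝ≥0, v_i(0) = 0. Let b be a pure Nash equilibrium of the multi-unit γ-hybrid auction in which every bidder's strategy space consists of nonincreasing marginal bid vectors satisfying no overbidding. Then ∑_i v_i(x_i(b)) = max { ∑_i v_i(y_i) : y : Fin n → ℕ, ∑_i y_i = k }, i.e., the equilibrium allocation maximizes social welfare. -/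
/-!
In equilibrium no marginal bid exceeds the highest losing bid `p`: a bid above `p` could be
capped strictly between `p` and itself without changing the allocation or the second price,
while the first-price part of the payment drops (`γ > 0`). So every winning bid equals `p` and
each bidder pays `p` per unit. Dropping the last unit, or bidding slightly above `p` for one
more unit, then shows that `p` lies between the marginal values of each bidder's last won and
first unwon unit. By submodularity `y ↦ v i y - y * p` is maximised at the allocation, and
since allocations and competing `y` both sum to `k`, the equilibrium welfare is maximal.
-/

open Finset
open scoped Classical

noncomputable section

/-- Lexicographic priority on pairs (bidder index, item index), used for tie-breaking. -/
def LexLT {n k : ℕ} (p q : Fin n × Fin k) : Prop :=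
  p.1 < q.1 ∨ (p.1 = q.1 ∧ p.2 < q.2)

/-- In a bid profile `b`, marginal bid `p` beats marginal bid `q` if it is strictly
higher, or equal and lexicographically prior. -/
def Beats {n k : ℕ} (b : Fin n → Fin k → ℝ) (p q : Fin n × Fin k) : Prop :=
  b q.1 q.2 < b p.1 p.2 ∨ (b p.1 p.2 = b q.1 q.2 ∧ LexLT p q)

/-- Marginal bid `q` is among the `k` highest (wins an item). -/
def WinsPair {n k : ℕ} (b : Fin n → Fin k → ℝ) (q : Fin n × Fin k) : Prop :=
  (univ.filter (fun p : Fin n × Fin k => Beats b p q)).card < k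

/-- The number of items allocated to bidder `i` under bid profile `b`. -/
def alloc {n k : ℕ} (b : Fin n → Fin k → ℝ) (i : Fin n) : ℕ :=
  (univ.filter (fun j : Fin k => WinsPair b (i, j))).card

/-- The highest losing marginal bid. -/
def highestLosing {n k : ℕ} (b : Fin n → Fin k → ℝ) : ℝ :=
  sSup {x : ℝ | ∃ q : Fin n × Fin k, ¬ WinsPair b q ∧ x = b q.1 q.2}

/-- The γ-hybrid payment of bidder `i`: a convex combination of the first-price payment
(the sum of `i`'s winning marginal bids) and the second-price payment. -/
def hybridPayment {n k : ℕ} (γ : ℝ) (b : Fin n → Fin k → ℝ) (i : Fin n) : ℝ :=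
  γ * (∑ j ∈ univ.filter (fun j : Fin k => (j : ℕ) < alloc b i), b i j)
    + (1 - γ) * (alloc b i : ℝ) * highestLosing b

/-- Utility of bidder `i` with valuation function `v i` in the multi-unit γ-hybrid
auction. -/
def hybridUtility {n k : ℕ} (γ : ℝ) (v : Fin n → ℕ → ℝ)
    (b : Fin n → Fin k → ℝ) (i : Fin n) : ℝ :=
  v i (alloc b i) - hybridPayment γ b i

/-- A valid bid vector for a bidder with valuation `vi`: nonnegative, nonincreasing
marginal bids satisfying no overbidding. -/
def ValidBid (k : ℕ) (vi : ℕ → ℝ) (bi : Fin k → ℝ) : Prop :=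
  (∀ j, 0 ≤ bi j) ∧ (∀ j j' : Fin k, j ≤ j' → bi j' ≤ bi j) ∧
    ∀ q : ℕ, 1 ≤ q → q ≤ k →
      (∑ j ∈ univ.filter (fun j : Fin k => (j : ℕ) < q), bi j) ≤ vi q

theorem card_filter_card_lt_lt {α β : Type*} [Fintype α] [LinearOrder β] {f : α → β}
    (hf : Function.Injective f) {k : ℕ} (hk : k ≤ Fintype.card α) :
    #{q | #{p | f p < f q} < k} = k := by
  set rank : α → ℕ := fun q => #{p | f p < f q}
  have rank_lt_rank {p q : α} (hpq : f p < f q) : rank p < rank q := by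
    refine card_lt_card ⟨fun r hr => ?_, fun h => ?_⟩
    · simp only [mem_filter, mem_univ, true_and] at hr ⊢
      exact hr.trans hpq
    · simpa using h (show p ∈ _ by simpa using hpq)
  have rank_injective : Function.Injective rank := by
    intro p q hpq
    by_contra hne
    rcases lt_or_gt_of_ne (hf.ne hne) with h | h
    · exact (rank_lt_rank h).ne hpq
    · exact (rank_lt_rank h).ne' hpq
  have rank_lt_card (q : α) : rank q < Fintype.card α :=
    card_lt_card (filter_ssubset.2 ⟨q, mem_univ q, lt_irrefl _⟩)
  have image_rank : univ.image rank = range (Fintype.card α) :=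
    eq_of_subset_of_card_le (fun m hm => by
      obtain ⟨q, -, rfl⟩ := mem_image.1 hm
      exact mem_range.2 (rank_lt_card q))
      (by rw [card_range, card_image_of_injective _ rank_injective, card_univ])
  calc #{q | rank q < k} = #((univ.image rank).filter (· < k)) := by
        rw [filter_image, card_image_of_injective _ rank_injective]
    _ = k := by
        rw [image_rank, range_eq_Ico, Ico_filter_lt, Nat.card_Ico, min_eq_right hk, Nat.sub_zero]

theorem Fin.mem_iff_val_lt_card_of_isLowerSet {k : ℕ} {s : Finset (Fin k)}
    (hs : IsLowerSet (s : Set (Fin k))) (j : Fin k) : j ∈ s ↔ (j : ℕ) < #s := by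
  constructor
  · intro hj
    have : Iic j ⊆ s := fun j' hj' => hs (mem_Iic.1 hj') hj
    simpa [Fin.card_Iic] using card_le_card this
  · intro hj
    by_contra hjs
    have : s ⊆ Iio j := fun j' hj' => mem_Iio.2 (lt_of_not_ge fun h => hjs (hs h hj'))
    have := card_le_card this
    rw [Fin.card_Iio] at this
    omega

theorem mul_le_sub_of_le_sub_succ {w : ℕ → ℝ} {p : ℝ} {a c : ℕ} (hac : a ≤ c)
    (h : ∀ m, a ≤ m → m < c → p ≤ w (m + 1) - w m) : ((c : ℝ) - a) * p ≤ w c - w a := by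
  have := card_nsmul_le_sum (Ico a c) (fun m => w (m + 1) - w m) p
    fun m hm => h m (mem_Ico.1 hm).1 (mem_Ico.1 hm).2
  rwa [sum_Ico_sub w hac, Nat.card_Ico, nsmul_eq_mul, Nat.cast_sub hac] at this

theorem sub_le_mul_of_sub_succ_le {w : ℕ → ℝ} {p : ℝ} {a c : ℕ} (hac : a ≤ c)
    (h : ∀ m, a ≤ m → m < c → w (m + 1) - w m ≤ p) : w c - w a ≤ ((c : ℝ) - a) * p := by
  have := mul_le_sub_of_le_sub_succ (w := fun m => -w m) (p := -p) hac
    fun m ham hmc => by linarith [h m ham hmc]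
  linarith

theorem le_add_mul_sub_of_sub_succ {w : ℕ → ℝ} {p : ℝ} {x y : ℕ}
    (hlo : ∀ m < x, p ≤ w (m + 1) - w m) (hhi : ∀ m, x ≤ m → m < y → w (m + 1) - w m ≤ p) :
    w y ≤ w x + ((y : ℝ) - x) * p := by
  rcases le_total x y with hxy | hyx
  · linarith [sub_le_mul_of_sub_succ_le hxy hhi]
  · linarith [mul_le_sub_of_le_sub_succ hyx fun m _ hmx => hlo m hmx]

theorem le_of_forall_pos_le_add_mul {a b C : ℝ} (hC : 0 ≤ C)
    (h : ∀ ε, 0 < ε → ε ≤ a - b → a ≤ b + C * ε) : a ≤ b := by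
  by_contra! hab
  have hε : 0 < (a - b) / (C + 1) := div_pos (by linarith) (by linarith)
  have := h _ hε (div_le_self (by linarith) (by linarith))
  have hlt : C * ((a - b) / (C + 1)) < a - b := by
    rw [mul_div_assoc', div_lt_iff₀ (by linarith)]
    nlinarith
  linarith

section Auction

variable {n k : ℕ}

/-- Sorting marginal bids by `Beats` is sorting by this key: bid descending, then priority. -/
def bidKey (b : Fin n → Fin k → ℝ) (q : Fin n × Fin k) : ℝᵒᵈ ×ₗ (Fin n ×ₗ Fin k) :=
  toLex (OrderDual.toDual (b q.1 q.2), toLex q)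

theorem beats_iff_bidKey_lt {b : Fin n → Fin k → ℝ} {p q : Fin n × Fin k} :
    Beats b p q ↔ bidKey b p < bidKey b q := by
  simp [Beats, LexLT, bidKey, Prod.Lex.toLex_lt_toLex]

theorem bidKey_injective (b : Fin n → Fin k → ℝ) : Function.Injective (bidKey b) := by
  intro p q h
  simpa [bidKey] using congrArg (fun x => (ofLex x).2) h

theorem Beats.trans {b : Fin n → Fin k → ℝ} {p q r : Fin n × Fin k}
    (hpq : Beats b p q) (hqr : Beats b q r) : Beats b p r := by
  rw [beats_iff_bidKey_lt] at *
  exact hpq.trans hqr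

theorem Beats.bid_le {b : Fin n → Fin k → ℝ} {p q : Fin n × Fin k} (h : Beats b p q) :
    b q.1 q.2 ≤ b p.1 p.2 :=
  h.elim le_of_lt fun h => h.1.ge

theorem not_beats_self (b : Fin n → Fin k → ℝ) (q : Fin n × Fin k) : ¬ Beats b q q := by
  simp [Beats, LexLT]

theorem card_winsPair (b : Fin n → Fin k → ℝ) (hn : 0 < n) :
    #{q | WinsPair b q} = k := by
  simp only [WinsPair, beats_iff_bidKey_lt]
  exact card_filter_card_lt_lt (bidKey_injective b)
    (by simpa using Nat.le_mul_of_pos_left k hn)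

theorem sum_alloc (b : Fin n → Fin k → ℝ) (hn : 0 < n) : ∑ i, alloc b i = k := by
  refine Eq.trans ?_ (card_winsPair b hn)
  rw [card_filter, Fintype.sum_prod_type]
  simp only [alloc, card_filter]

theorem alloc_le (b : Fin n → Fin k → ℝ) (i : Fin n) : alloc b i ≤ k :=
  (card_filter_le _ _).trans_eq (card_fin k)

theorem exists_not_winsPair (b : Fin n → Fin k → ℝ) (hn : 1 < n) (hk : 0 < k) :
    ∃ q, ¬ WinsPair b q := by
  by_contra! h
  have := card_winsPair b (by omega)
  rw [filter_true_of_mem fun q _ => h q, card_univ, Fintype.card_prod, Fintype.card_fin,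
    Fintype.card_fin] at this
  nlinarith

theorem le_highestLosing (b : Fin n → Fin k → ℝ) {q : Fin n × Fin k} (hq : ¬ WinsPair b q) :
    b q.1 q.2 ≤ highestLosing b := by
  refine le_csSup (Set.Finite.bddAbove ?_) ⟨q, hq, rfl⟩
  exact (Set.finite_range fun q : Fin n × Fin k => b q.1 q.2).subset
    fun _ ⟨q, _, hx⟩ => ⟨q, hx.symm⟩

/-- The highest losing bid is the `(k+1)`-st highest marginal bid. -/
theorem highestLosing_le_iff (b : Fin n → Fin k → ℝ) (hn : 1 < n) (hk : 0 < k) {c : ℝ} :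
    highestLosing b ≤ c ↔ #{q : Fin n × Fin k | c < b q.1 q.2} ≤ k := by
  constructor
  · intro hc
    refine (card_le_card fun q hq => ?_).trans (card_winsPair b (by omega)).le
    simp only [mem_filter, mem_univ, true_and] at hq ⊢
    by_contra hw
    exact (hq.trans_le ((le_highestLosing b hw).trans hc)).false
  · intro hc
    obtain ⟨q₀, hq₀⟩ := exists_not_winsPair b hn hk
    refine csSup_le ⟨_, q₀, hq₀, rfl⟩ ?_
    rintro _ ⟨q, hq, rfl⟩
    by_contra! hcq
    apply hq
    have hsub : insert q (univ.filter fun p => Beats b p q) ⊆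
        univ.filter fun p : Fin n × Fin k => c < b p.1 p.2 := by
      intro p hp
      rcases mem_insert.1 hp with rfl | hp
      · simpa using hcq
      · simpa using hcq.trans_le (mem_filter.1 hp).2.bid_le
    have := card_le_card hsub
    rw [card_insert_of_notMem (by simp [not_beats_self])] at this
    exact Nat.lt_of_succ_le (this.trans hc)

theorem highestLosing_le_of_winsPair (b : Fin n → Fin k → ℝ) (hn : 1 < n) (hk : 0 < k)
    {q : Fin n × Fin k} (hq : WinsPair b q) : highestLosing b ≤ b q.1 q.2 := by
  unfold WinsPair at hq
  refine (highestLosing_le_iff b hn hk).2 ((card_le_card fun p hp => ?_).trans hq.le)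
  simp only [mem_filter, mem_univ, true_and] at hp ⊢
  exact Or.inl hp

theorem winsPair_of_highestLosing_lt (b : Fin n → Fin k → ℝ) {q : Fin n × Fin k}
    (h : highestLosing b < b q.1 q.2) : WinsPair b q := by
  by_contra hq
  exact (le_highestLosing b hq).not_gt h

theorem highestLosing_nonneg (b : Fin n → Fin k → ℝ) (hn : 1 < n) (hk : 0 < k)
    (hb : ∀ i j, 0 ≤ b i j) : 0 ≤ highestLosing b := by
  obtain ⟨q, hq⟩ := exists_not_winsPair b hn hk
  exact (hb q.1 q.2).trans (le_highestLosing b hq)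

theorem highestLosing_mono {b b' : Fin n → Fin k → ℝ} (hn : 1 < n) (hk : 0 < k)
    (h : b' ≤ b) : highestLosing b' ≤ highestLosing b := by
  rw [highestLosing_le_iff b' hn hk]
  refine (card_le_card fun q hq => ?_).trans ((highestLosing_le_iff b hn hk).1 le_rfl)
  simp only [mem_filter, mem_univ, true_and] at hq ⊢
  exact hq.trans_le (h q.1 q.2)

/-- A single bidder holds only `k` of the marginal bids. -/
theorem highestLosing_le_of_forall_ne (b : Fin n → Fin k → ℝ) (hn : 1 < n) (hk : 0 < k)
    (i : Fin n) {c : ℝ} (hc : ∀ i' ≠ i, ∀ j, b i' j ≤ c) : highestLosing b ≤ c := by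
  rw [highestLosing_le_iff b hn hk]
  refine (card_le_card fun q hq => ?_).trans ((card_image_le (s := univ)).trans_eq
    (card_fin k) : #(univ.image (Prod.mk i)) ≤ k)
  simp only [mem_filter, mem_univ, true_and, mem_image] at hq ⊢
  by_contra! hqi
  exact (hc q.1 (fun h => hqi q.2 (by rw [← h])) q.2).not_gt hq

theorem winsPair_of_le {b b' : Fin n → Fin k → ℝ} (h : b' ≤ b)
    {q : Fin n × Fin k} (hq : b' q.1 q.2 = b q.1 q.2) (hw : WinsPair b q) : WinsPair b' q := by
  unfold WinsPair at hw ⊢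
  refine (card_le_card fun p hp => ?_).trans_lt hw
  simp only [mem_filter, mem_univ, true_and] at hp ⊢
  unfold Beats at hp ⊢
  rw [hq] at hp
  rcases hp with hp | ⟨hp, hlex⟩
  · exact Or.inl (hp.trans_le (h p.1 p.2))
  · rcases (h p.1 p.2).lt_or_eq with hlt | heq
    · exact Or.inl (hp ▸ hlt)
    · exact Or.inr ⟨heq ▸ hp, hlex⟩

theorem beats_iff_lt_of_antitone {b : Fin n → Fin k → ℝ} {i : Fin n} (hb : Antitone (b i))
    (j j' : Fin k) : Beats b (i, j') (i, j) ↔ j' < j := by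
  simp only [Beats, LexLT, lt_irrefl, false_or, true_and]
  constructor
  · rintro (h | ⟨-, h⟩)
    · exact lt_of_not_ge fun hj => (hb hj).not_gt h
    · exact h
  · intro h
    rcases (hb h.le).lt_or_eq with hlt | heq
    · exact Or.inl hlt
    · exact Or.inr ⟨heq.symm, h⟩

theorem winsPair_iff_lt_alloc {b : Fin n → Fin k → ℝ} {i : Fin n} (hb : Antitone (b i))
    (j : Fin k) : WinsPair b (i, j) ↔ (j : ℕ) < alloc b i := by
  have hlower : IsLowerSet ((univ.filter fun j => WinsPair b (i, j) : Finset (Fin k)) :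
      Set (Fin k)) := by
    intro j₁ j₂ hle hj₁
    simp only [mem_coe, mem_filter, mem_univ, true_and] at hj₁ ⊢
    unfold WinsPair at hj₁ ⊢
    rcases hle.lt_or_eq with hlt | rfl
    · refine (card_le_card fun p hp => ?_).trans_lt hj₁
      simp only [mem_filter, mem_univ, true_and] at hp ⊢
      exact hp.trans ((beats_iff_lt_of_antitone hb j₁ j₂).2 hlt)
    · exact hj₁
  simpa [alloc] using Fin.mem_iff_val_lt_card_of_isLowerSet hlower j

theorem winsPair_update_iff {b : Fin n → Fin k → ℝ} {i : Fin n} {bi : Fin k → ℝ}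
    (hb : Antitone (b i)) (hbi : Antitone bi) {j : Fin k} (hj : bi j = b i j) :
    WinsPair (Function.update b i bi) (i, j) ↔ WinsPair b (i, j) := by
  suffices h : ∀ p, Beats (Function.update b i bi) p (i, j) ↔ Beats b p (i, j) by
    simp only [WinsPair, h]
  rintro ⟨i', j'⟩
  by_cases hi : i' = i
  · subst hi
    rw [beats_iff_lt_of_antitone hb, beats_iff_lt_of_antitone (by simpa using hbi)]
  · simp [Beats, Function.update_of_ne hi, hj]

def stepBid (k m : ℕ) (t : ℝ) : Fin k → ℝ := fun j => if (j : ℕ) < m then t else 0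

theorem stepBid_nonneg {m : ℕ} {t : ℝ} (ht : 0 ≤ t) (j : Fin k) : 0 ≤ stepBid k m t j := by
  unfold stepBid; split_ifs <;> simp [ht]

theorem stepBid_antitone {m : ℕ} {t : ℝ} (ht : 0 ≤ t) : Antitone (stepBid k m t) := by
  intro j₁ j₂ hj
  have : (j₁ : ℕ) ≤ j₂ := hj
  unfold stepBid; split_ifs <;> first | rfl | exact ht | omega

theorem sum_stepBid {m q : ℕ} (t : ℝ) (hq : q ≤ k) :
    ∑ j ∈ univ.filter (fun j : Fin k => (j : ℕ) < q), stepBid k m t j = (min q m : ℕ) * t := by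
  unfold stepBid
  rw [sum_ite, sum_const_zero, add_zero, sum_const, filter_filter, nsmul_eq_mul]
  simp only [← lt_min_iff, Fin.card_filter_val_lt, min_eq_right (min_le_left q m |>.trans hq)]

theorem sum_filter_val_lt_const (m : ℕ) (c : ℝ) (hm : m ≤ k) :
    ∑ _j ∈ univ.filter (fun j : Fin k => (j : ℕ) < m), c = m * c := by
  rw [sum_const, Fin.card_filter_val_lt, min_eq_right hm, nsmul_eq_mul]

theorem hybridUtility_le {γ : ℝ} (hγ : 0 ≤ γ) (v : Fin n → ℕ → ℝ) (b : Fin n → Fin k → ℝ)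
    (hn : 1 < n) (hk : 0 < k) {i : Fin n} (hb : Antitone (b i)) :
    hybridUtility γ v b i ≤ v i (alloc b i) - alloc b i * highestLosing b := by
  have hsum : (alloc b i : ℝ) * highestLosing b ≤
      ∑ j ∈ univ.filter (fun j : Fin k => (j : ℕ) < alloc b i), b i j := by
    rw [← sum_filter_val_lt_const _ _ (alloc_le b i)]
    refine sum_le_sum fun j hj => highestLosing_le_of_winsPair b hn hk (q := (i, j)) ?_
    exact (winsPair_iff_lt_alloc hb j).2 (mem_filter.1 hj).2
  unfold hybridUtility hybridPayment
  nlinarith [mul_le_mul_of_nonneg_left hsum hγ]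

theorem le_hybridUtility_update_stepBid {γ : ℝ} (hγ : γ ≤ 1) {v : Fin n → ℕ → ℝ}
    {b : Fin n → Fin k → ℝ} (hn : 1 < n) (hk : 0 < k) {i : Fin n}
    (hv : MonotoneOn (v i) (Set.Iic k)) {m : ℕ} {t c : ℝ} (hm : m ≤ k) (ht : 0 ≤ t)
    (hc : 0 ≤ c)
    (hwin : ∀ j : Fin k, (j : ℕ) < m → WinsPair (Function.update b i (stepBid k m t)) (i, j))
    (hlose : highestLosing (Function.update b i (stepBid k m t)) ≤ c) :
    v i m - γ * (m * t) - (1 - γ) * (m * c) ≤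
      hybridUtility γ v (Function.update b i (stepBid k m t)) i := by
  set b' := Function.update b i (stepBid k m t)
  have hb'i : b' i = stepBid k m t := Function.update_self ..
  have hanti : Antitone (b' i) := hb'i ▸ stepBid_antitone ht
  have hmx : m ≤ alloc b' i := by
    by_contra! hx
    have := (winsPair_iff_lt_alloc hanti ⟨_, hx.trans_le hm⟩).1 (hwin _ hx)
    exact this.false
  have hsum : ∑ j ∈ univ.filter (fun j : Fin k => (j : ℕ) < alloc b' i), b' i j = m * t := by
    rw [hb'i, sum_stepBid t (alloc_le b' i), min_eq_right hmx]
  have hsecond : (alloc b' i : ℝ) * highestLosing b' ≤ m * c := by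
    rcases hmx.eq_or_lt with heq | hlt
    · rw [← heq]
      exact mul_le_mul_of_nonneg_left hlose (Nat.cast_nonneg m)
    · -- more than `m` units are won, so one of them is a zero bid
      have hwins : WinsPair b' (i, ⟨m, hlt.trans_le (alloc_le b' i)⟩) :=
        (winsPair_iff_lt_alloc hanti _).2 hlt
      have hzero : highestLosing b' ≤ 0 := by
        simpa [hb'i, stepBid] using highestLosing_le_of_winsPair b' hn hk hwins
      nlinarith [Nat.cast_nonneg (α := ℝ) (alloc b' i), Nat.cast_nonneg (α := ℝ) m]
  have hvx : v i m ≤ v i (alloc b' i) := hv (Set.mem_Iic.2 hm) (Set.mem_Iic.2 (alloc_le b' i)) hmx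
  unfold hybridUtility hybridPayment
  rw [hsum]
  nlinarith [mul_le_mul_of_nonneg_left hsecond (sub_nonneg.2 hγ)]

theorem ValidBid.of_le {vi : ℕ → ℝ} {bi bi' : Fin k → ℝ} (hbi : ValidBid k vi bi)
    (hnonneg : ∀ j, 0 ≤ bi' j) (hanti : Antitone bi') (hle : bi' ≤ bi) : ValidBid k vi bi' :=
  ⟨hnonneg, fun _ _ hj => hanti hj,
    fun q hq hqk => (sum_le_sum fun j _ => hle j).trans (hbi.2.2 q hq hqk)⟩

theorem alloc_update_min_eq {b : Fin n → Fin k → ℝ} (hn : 1 < n) (hk : 0 < k) {i : Fin n}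
    (hb : Antitone (b i)) {t : ℝ} (ht : highestLosing b < t) :
    alloc (Function.update b i fun j => min (b i j) t) i = alloc b i := by
  set b' := Function.update b i fun j => min (b i j) t
  have hle : b' ≤ b := update_le_iff.2 ⟨fun j => min_le_left _ _, fun _ _ => le_rfl⟩
  have hlose : highestLosing b' < t := (highestLosing_mono hn hk hle).trans_lt ht
  unfold alloc
  congr 1
  refine filter_congr fun j _ => ?_
  by_cases hjt : b i j ≤ t
  · exact winsPair_update_iff hb (fun _ _ hj => min_le_min_right t (hb hj)) (min_eq_left hjt)
  · push Not at hjt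
    refine iff_of_true (winsPair_of_highestLosing_lt b' ?_)
      (winsPair_of_highestLosing_lt b (ht.trans hjt))
    simpa [b', min_eq_right hjt.le] using hlose

end Auction

def IsHybridPNE {n k : ℕ} (γ : ℝ) (v : Fin n → ℕ → ℝ) (b : Fin n → Fin k → ℝ) : Prop :=
  (∀ i, ValidBid k (v i) (b i)) ∧
    ∀ i, ∀ bi' : Fin k → ℝ, ValidBid k (v i) bi' →
      hybridUtility γ v (Function.update b i bi') i ≤ hybridUtility γ v b i

namespace IsHybridPNE

variable {n k : ℕ} {γ : ℝ} {v : Fin n → ℕ → ℝ} {b : Fin n → Fin k → ℝ}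

theorem antitone (h : IsHybridPNE γ v b) (i : Fin n) : Antitone (b i) :=
  fun _ _ hj => (h.1 i).2.1 _ _ hj

theorem highestLosing_nonneg (h : IsHybridPNE γ v b) (hn : 1 < n) (hk : 0 < k) :
    0 ≤ highestLosing b :=
  _root_.highestLosing_nonneg b hn hk fun i => (h.1 i).1

/-- Capping a bid that exceeds the highest losing bid keeps the allocation and the second
price but lowers the first-price part of the payment. -/
theorem bid_le_highestLosing (h : IsHybridPNE γ v b) (hn : 1 < n) (hk : 0 < k) (hγ0 : 0 < γ)
    (hγ1 : γ ≤ 1) (i : Fin n) (j : Fin k) : b i j ≤ highestLosing b := by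
  by_contra! hj
  set p := highestLosing b
  obtain ⟨t, hpt, htj⟩ := exists_between hj
  set bi : Fin k → ℝ := fun j' => min (b i j') t
  have hbi : bi ≤ b i := fun j' => min_le_left _ _
  have hvalid : ValidBid k (v i) bi :=
    (h.1 i).of_le (fun j' => le_min ((h.1 i).1 j') (by linarith [h.highestLosing_nonneg hn hk]))
      (fun _ _ hj' => min_le_min_right t (h.antitone i hj')) hbi
  have hlose : highestLosing (Function.update b i bi) ≤ p :=
    highestLosing_mono hn hk (update_le_iff.2 ⟨hbi, fun _ _ => le_rfl⟩)
  have hjx : (j : ℕ) < alloc b i :=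
    (winsPair_iff_lt_alloc (h.antitone i) j).1 (winsPair_of_highestLosing_lt b hj)
  have hsum : ∑ j' ∈ univ.filter (fun j' : Fin k => (j' : ℕ) < alloc b i), bi j' <
      ∑ j' ∈ univ.filter (fun j' : Fin k => (j' : ℕ) < alloc b i), b i j' :=
    sum_lt_sum (fun j' _ => hbi j') ⟨j, by simpa using hjx, min_lt_of_right_lt htj⟩
  have hdev := h.2 i bi hvalid
  unfold hybridUtility hybridPayment at hdev
  rw [alloc_update_min_eq hn hk (h.antitone i) hpt, Function.update_self] at hdev
  have hx : (0 : ℝ) ≤ (1 - γ) * alloc b i := mul_nonneg (by linarith) (Nat.cast_nonneg _)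
  nlinarith [mul_lt_mul_of_pos_left hsum hγ0, mul_le_mul_of_nonneg_left hlose hx]

theorem bid_eq_highestLosing (h : IsHybridPNE γ v b) (hn : 1 < n) (hk : 0 < k) (hγ0 : 0 < γ)
    (hγ1 : γ ≤ 1) {i : Fin n} {j : Fin k} (hj : (j : ℕ) < alloc b i) :
    b i j = highestLosing b :=
  (h.bid_le_highestLosing hn hk hγ0 hγ1 i j).antisymm
    (highestLosing_le_of_winsPair b hn hk (q := (i, j))
      ((winsPair_iff_lt_alloc (h.antitone i) j).2 hj))

/-- Deviation: bid `highestLosing b` on the first `m` units only. -/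
theorem highestLosing_le_sub_of_alloc_eq_succ (h : IsHybridPNE γ v b) (hn : 1 < n)
    (hk : 0 < k) (hγ0 : 0 < γ) (hγ1 : γ ≤ 1) {i : Fin n} (hv : MonotoneOn (v i) (Set.Iic k))
    {m : ℕ} (hm : alloc b i = m + 1) : highestLosing b ≤ v i (m + 1) - v i m := by
  have hp := h.highestLosing_nonneg hn hk
  have hmk : m ≤ k := by have := alloc_le b i; omega
  have hstep : stepBid k m (highestLosing b) ≤ b i := by
    intro j
    unfold stepBid
    split_ifs with hj
    · exact (h.bid_eq_highestLosing hn hk hγ0 hγ1 (by omega)).ge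
    · exact (h.1 i).1 j
  have hvalid := (h.1 i).of_le (stepBid_nonneg hp) (stepBid_antitone hp) hstep
  have hle : Function.update b i (stepBid k m (highestLosing b)) ≤ b :=
    update_le_iff.2 ⟨hstep, fun _ _ => le_rfl⟩
  have hwin (j : Fin k) (hj : (j : ℕ) < m) :
      WinsPair (Function.update b i (stepBid k m (highestLosing b))) (i, j) := by
    refine winsPair_of_le hle ?_ ((winsPair_iff_lt_alloc (h.antitone i) j).2 (by omega))
    simp [stepBid, hj, h.bid_eq_highestLosing hn hk hγ0 hγ1 (i := i) (j := j) (by omega)]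
  have hdev := le_hybridUtility_update_stepBid hγ1 hn hk hv hmk hp hp hwin
    (highestLosing_mono hn hk hle)
  have hcur := hybridUtility_le hγ0.le v b hn hk (h.antitone i)
  rw [hm, Nat.cast_succ] at hcur
  linarith [h.2 i _ hvalid]

/-- Deviation: bid slightly above `highestLosing b`, which bounds all other bids, on
`alloc b i + 1` units. -/
theorem sub_le_highestLosing_of_alloc_lt (h : IsHybridPNE γ v b) (hn : 1 < n) (hk : 0 < k)
    (hγ0 : 0 < γ) (hγ1 : γ ≤ 1) {i : Fin n} (hv0 : v i 0 = 0)
    (hv : MonotoneOn (v i) (Set.Iic k))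
    (hΔ : AntitoneOn (fun q => v i (q + 1) - v i q) (Set.Iio k)) (hx : alloc b i < k) :
    v i (alloc b i + 1) - v i (alloc b i) ≤ highestLosing b := by
  set x := alloc b i
  set p := highestLosing b
  have hp := h.highestLosing_nonneg hn hk
  refine le_of_forall_pos_le_add_mul (C := γ * (x + 1)) (by positivity) fun ε hε hεx => ?_
  set t := p + ε
  have ht : 0 ≤ t := by positivity
  have hmarg (r : ℕ) (hr : r < x + 1) : t ≤ v i (r + 1) - v i r :=
    (le_sub_iff_add_le'.1 hεx).trans (hΔ (Set.mem_Iio.2 (by omega)) (Set.mem_Iio.2 hx)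
      (by omega))
  have hvalid : ValidBid k (v i) (stepBid k (x + 1) t) := by
    refine ⟨stepBid_nonneg ht, fun _ _ hj => stepBid_antitone ht hj, fun q _ hqk => ?_⟩
    rw [sum_stepBid t hqk]
    have hlow := mul_le_sub_of_le_sub_succ (Nat.zero_le (min q (x + 1)))
      fun r _ hr => hmarg r (hr.trans_le (min_le_right _ _))
    have hup := hv (Set.mem_Iic.2 ((min_le_left _ _).trans hqk)) (Set.mem_Iic.2 hqk)
      (min_le_left q (x + 1))
    simp only [Nat.cast_zero, sub_zero, hv0] at hlow
    linarith
  set b' := Function.update b i (stepBid k (x + 1) t)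
  have hlose : highestLosing b' ≤ p := by
    refine highestLosing_le_of_forall_ne b' hn hk i fun i' hi' j => ?_
    simpa [b', Function.update_of_ne hi'] using h.bid_le_highestLosing hn hk hγ0 hγ1 i' j
  have hwin (j : Fin k) (hj : (j : ℕ) < x + 1) : WinsPair b' (i, j) :=
    winsPair_of_highestLosing_lt b' (by simp [b', stepBid, hj, t]; linarith)
  have hdev := le_hybridUtility_update_stepBid hγ1 hn hk hv hx ht hp hwin hlose
  have hcur := hybridUtility_le hγ0.le v b hn hk (h.antitone i)
  push_cast at hdev
  nlinarith [h.2 i _ hvalid]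

theorem value_le_value_alloc_add (h : IsHybridPNE γ v b) (hn : 1 < n) (hk : 0 < k)
    (hγ0 : 0 < γ) (hγ1 : γ ≤ 1) {i : Fin n} (hv0 : v i 0 = 0)
    (hv : MonotoneOn (v i) (Set.Iic k))
    (hΔ : AntitoneOn (fun q => v i (q + 1) - v i q) (Set.Iio k)) {y : ℕ} (hy : y ≤ k) :
    v i y ≤ v i (alloc b i) + ((y : ℝ) - alloc b i) * highestLosing b := by
  refine le_add_mul_sub_of_sub_succ (fun m hm => ?_) fun m hxm hmy => ?_
  · obtain ⟨x, hx⟩ := Nat.exists_eq_add_of_lt hm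
    have hxk := alloc_le b i
    exact (h.highestLosing_le_sub_of_alloc_eq_succ hn hk hγ0 hγ1 hv
      (m := m + x) (by omega)).trans (hΔ (Set.mem_Iio.2 (by omega)) (Set.mem_Iio.2 (by omega))
      (by omega))
  · exact (hΔ (Set.mem_Iio.2 (by omega)) (Set.mem_Iio.2 (by omega)) hxm).trans
      (h.sub_le_highestLosing_of_alloc_lt hn hk hγ0 hγ1 hv0 hv hΔ (by omega))

end IsHybridPNE

/-- Pure Nash equilibria of the multi-unit γ-hybrid auction without overbidding are
efficient: for `γ ∈ (0,1)`, `k ≥ 1` items and `n ≥ 2` bidders with nondecreasing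
submodular valuations vanishing at `0`, the social welfare of any pure Nash equilibrium
(in nonincreasing, no-overbidding marginal bid vectors) is the maximum welfare
`max {∑ i, v i (y i) : ∑ i, y i = k}`. -/
theorem pne_efficient_multiunit_hybrid {n k : ℕ} (hn : 2 ≤ n) (hk : 1 ≤ k)
    (γ : ℝ) (hγ : γ ∈ Set.Ioo (0:ℝ) 1)
    (v : Fin n → ℕ → ℝ)
    (hv0 : ∀ i, v i 0 = 0)
    (hvmono : ∀ i (q : ℕ), q < k → v i q ≤ v i (q + 1))
    (hvsub : ∀ i (q : ℕ), 1 ≤ q → q + 1 ≤ k →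
      v i (q + 1) - v i q ≤ v i q - v i (q - 1))
    (b : Fin n → Fin k → ℝ)
    (hb : ∀ i, ValidBid k (v i) (b i))
    (hPNE : ∀ i, ∀ bi' : Fin k → ℝ, ValidBid k (v i) bi' →
      hybridUtility γ v (Function.update b i bi') i ≤ hybridUtility γ v b i) :
    IsGreatest {s : ℝ | ∃ y : Fin n → ℕ, (∑ i, y i) = k ∧ s = ∑ i, v i (y i)}
      (∑ i, v i (alloc b i)) := by
  obtain ⟨hγ0, hγ1⟩ := hγ
  have hpne : IsHybridPNE γ v b := ⟨hb, hPNE⟩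
  have hmono (i : Fin n) : MonotoneOn (v i) (Set.Iic k) :=
    monotoneOn_of_le_succ Set.ordConnected_Iic fun q _ _ hq =>
      hvmono i q (Order.succ_le_iff.1 hq)
  have hconc (i : Fin n) : AntitoneOn (fun q => v i (q + 1) - v i q) (Set.Iio k) :=
    antitoneOn_of_succ_le Set.ordConnected_Iio fun q _ _ hq => by
      rw [Set.mem_Iio, Order.succ_eq_add_one] at hq
      simpa using hvsub i (q + 1) (by omega) (by omega)
  refine ⟨⟨alloc b, sum_alloc b (by omega), rfl⟩, ?_⟩
  rintro _ ⟨y, hy, rfl⟩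
  have hyk (i : Fin n) : y i ≤ k := hy ▸ single_le_sum (fun _ _ => Nat.zero_le _) (mem_univ i)
  calc ∑ i, v i (y i)
      ≤ ∑ i, (v i (alloc b i) + ((y i : ℝ) - alloc b i) * highestLosing b) :=
        sum_le_sum fun i _ => hpne.value_le_value_alloc_add hn hk hγ0 hγ1.le (hv0 i) (hmono i)
          (hconc i) (hyk i)
    _ = ∑ i, v i (alloc b i) := by
        rw [sum_add_distrib, ← sum_mul, sum_sub_distrib, ← Nat.cast_sum, ← Nat.cast_sum, hy,
          sum_alloc b (by omega), sub_self, zero_mul, add_zero]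

end
end

section
/- CDF constraints imposed by coarse correlated equilibria in the two-bidder single-item γ-hybrid auction: Let γ ∈ [0,1], valuations v_1 = 1 and v_2 = v with 0 ≤ v ≤ 1. Let μ be a probability measure on no-overbidding bid profiles (b_1 ≤ 1, b_2 ≤ v, μ-a.s.), with utilities μ-integrable, satisfying the coarse correlated equilibrium condition for constant deviations b'_i ∈ [0, v_i]. Set α := E_{b∼μ}[u_1(b)]. Then: (i) for every x ∈ [0,1), μ({b : b_2 < x}) ≤ α/(1−x); and (ii) if v < 1 then α ≥ 1 − v. -/
open MeasureTheory
open scoped NNReal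

/-!
Bidder 1 deviating to the constant bid `x ≤ 1` wins against every bid `b₂ < x` and then pays
at most `x`, so `E[u₁] ≥ E[u₁(x, b₂)] ≥ (1 - x) μ(b₂ < x)`; this is (i). Since `b₂ ≤ v` almost
surely, every `x ∈ (v, 1]` has `μ(b₂ < x) = 1`, so `E[u₁] ≥ 1 - x`, and letting `x ↓ v` gives (ii).
-/

lemma measurableSet_bid_lt (x : ℝ) : MeasurableSet {b : ℝ≥0 × ℝ≥0 | (b.2 : ℝ) < x} :=
  measurableSet_lt (measurable_coe_nnreal_real.comp measurable_snd) measurable_const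

section HybridAuction

variable {γ : ℝ} {w : ℝ≥0 × ℝ≥0 → Fin 2} {u1 : ℝ≥0 × ℝ≥0 → ℝ}

lemma winner_eq_zero_of_lt {b : ℝ≥0 × ℝ≥0} (hw : w b = 1 → b.1 ≤ b.2) (hb : b.2 < b.1) :
    w b = 0 := by
  by_contra h
  exact (hw (by omega)).not_gt hb

lemma one_sub_le_hybrid_utility (hγ1 : γ ≤ 1) {own other : ℝ} (h : other ≤ own) :
    1 - own ≤ 1 - (γ * own + (1 - γ) * other) := by
  nlinarith

variable (hγ1 : γ ≤ 1)
  (hw : ∀ b : ℝ≥0 × ℝ≥0, (w b = 0 → b.2 ≤ b.1) ∧ (w b = 1 → b.1 ≤ b.2))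
  (hu1 : ∀ b, u1 b = if w b = 0 then 1 - (γ * (b.1 : ℝ) + (1 - γ) * (b.2 : ℝ)) else 0)
include hγ1 hw hu1

lemma indicator_le_deviation_utility {x : ℝ} (hx0 : 0 ≤ x) (hx1 : x ≤ 1) (b : ℝ≥0 × ℝ≥0) :
    {b : ℝ≥0 × ℝ≥0 | (b.2 : ℝ) < x}.indicator (fun _ => 1 - x) b ≤ u1 (x.toNNReal, b.2) := by
  have hcx : ((x.toNNReal : ℝ≥0) : ℝ) = x := Real.coe_toNNReal x hx0
  rw [hu1]
  by_cases hb : b ∈ {b : ℝ≥0 × ℝ≥0 | (b.2 : ℝ) < x}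
  · have hwin : w (x.toNNReal, b.2) = 0 :=
      winner_eq_zero_of_lt (hw _).2 (Real.lt_toNNReal_iff_coe_lt.2 hb)
    rw [Set.indicator_of_mem hb, if_pos hwin, hcx]
    exact one_sub_le_hybrid_utility hγ1 (le_of_lt hb)
  · rw [Set.indicator_of_notMem hb]
    split_ifs with hwin
    · have hb2 : (b.2 : ℝ) ≤ x := by rw [← hcx]; exact_mod_cast (hw _).1 hwin
      rw [hcx]
      linarith [one_sub_le_hybrid_utility hγ1 hb2]
    · exact le_rfl

lemma mul_measureReal_bid_lt_le_integral (μ : Measure (ℝ≥0 × ℝ≥0)) [IsFiniteMeasure μ]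
    (hIntdev1 : ∀ b' : ℝ≥0, Integrable (fun b : ℝ≥0 × ℝ≥0 => u1 (b', b.2)) μ)
    (hCCE1 : ∀ b' : ℝ≥0, (b' : ℝ) ≤ 1 → ∫ b, u1 (b', b.2) ∂μ ≤ ∫ b, u1 b ∂μ)
    {x : ℝ} (hx0 : 0 ≤ x) (hx1 : x ≤ 1) :
    (1 - x) * μ.real {b : ℝ≥0 × ℝ≥0 | (b.2 : ℝ) < x} ≤ ∫ b, u1 b ∂μ := by
  have hS := measurableSet_bid_lt x
  calc (1 - x) * μ.real {b : ℝ≥0 × ℝ≥0 | (b.2 : ℝ) < x}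
      = ∫ b, {b : ℝ≥0 × ℝ≥0 | (b.2 : ℝ) < x}.indicator (fun _ => 1 - x) b ∂μ := by
        rw [integral_indicator_const _ hS, smul_eq_mul, mul_comm]
    _ ≤ ∫ b, u1 (x.toNNReal, b.2) ∂μ :=
        integral_mono ((integrable_const _).indicator hS) (hIntdev1 _)
          (indicator_le_deviation_utility hγ1 hw hu1 hx0 hx1)
    _ ≤ ∫ b, u1 b ∂μ := hCCE1 _ (by rwa [Real.coe_toNNReal x hx0])

end HybridAuction

lemma measureReal_bid_lt_eq_one {v : ℝ} (μ : Measure (ℝ≥0 × ℝ≥0)) [IsProbabilityMeasure μ]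
    (hbid : ∀ᵐ b ∂μ, (b.2 : ℝ) ≤ v) {x : ℝ} (hvx : v < x) :
    μ.real {b : ℝ≥0 × ℝ≥0 | (b.2 : ℝ) < x} = 1 := by
  have hS := measurableSet_bid_lt x
  have hae : ∀ᵐ b ∂μ, (b.2 : ℝ) < x := hbid.mono fun _ hb => hb.trans_lt hvx
  rw [Measure.real, (ae_iff_measure_eq hS.nullMeasurableSet).1 hae, measure_univ,
    ENNReal.toReal_one]

lemma le_of_forall_lt_one_sub_le {v α : ℝ} (hv1 : v < 1)
    (h : ∀ x : ℝ, v < x → x ≤ 1 → 1 - x ≤ α) : 1 - v ≤ α := by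
  refine le_of_forall_pos_le_add fun ε hε => ?_
  have := h (min (v + ε) 1) (lt_min (by linarith) hv1) (min_le_right _ _)
  linarith [min_le_left (v + ε) 1]

theorem cce_cdf_constraints_two_bidders_general
    (γ : ℝ) (hγ1 : γ ≤ 1) (v : ℝ) (hv0 : 0 ≤ v)
    (w : ℝ≥0 × ℝ≥0 → Fin 2)
    (hw : ∀ b : ℝ≥0 × ℝ≥0, (w b = 0 → b.2 ≤ b.1) ∧ (w b = 1 → b.1 ≤ b.2))
    (u1 : ℝ≥0 × ℝ≥0 → ℝ)
    (hu1 : ∀ b, u1 b = if w b = 0 then 1 - (γ * (b.1 : ℝ) + (1 - γ) * (b.2 : ℝ)) else 0)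
    (μ : Measure (ℝ≥0 × ℝ≥0)) [IsProbabilityMeasure μ]
    (hNOB : ∀ᵐ b ∂μ, (b.1 : ℝ) ≤ 1 ∧ (b.2 : ℝ) ≤ v)
    (hIntdev1 : ∀ b' : ℝ≥0, Integrable (fun b : ℝ≥0 × ℝ≥0 => u1 (b', b.2)) μ)
    (hCCE1 : ∀ b' : ℝ≥0, (b' : ℝ) ≤ 1 →
      ∫ b, u1 (b', b.2) ∂μ ≤ ∫ b, u1 b ∂μ)
    (α : ℝ) (hα : α = ∫ b, u1 b ∂μ) :
    (∀ x : ℝ, 0 ≤ x → x < 1 →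
      (μ {b : ℝ≥0 × ℝ≥0 | (b.2 : ℝ) < x}).toReal ≤ α / (1 - x)) ∧
    (v < 1 → 1 - v ≤ α) := by
  have hbound : ∀ x : ℝ, 0 ≤ x → x ≤ 1 → (1 - x) * μ.real {b : ℝ≥0 × ℝ≥0 | (b.2 : ℝ) < x} ≤ α :=
    fun x hx0 hx1 =>
      hα ▸ mul_measureReal_bid_lt_le_integral hγ1 hw hu1 μ hIntdev1 hCCE1 hx0 hx1
  refine ⟨fun x hx0 hx1 => ?_, fun hv1 => ?_⟩
  · rw [le_div_iff₀ (sub_pos.2 hx1), mul_comm]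
    exact hbound x hx0 hx1.le
  · refine le_of_forall_lt_one_sub_le hv1 fun x hvx hx1 => ?_
    have hfull := measureReal_bid_lt_eq_one μ (hNOB.mono fun _ hb => hb.2) hvx
    simpa [hfull] using hbound x (hv0.trans hvx.le) hx1

/-- CDF constraints imposed by coarse correlated equilibria in the two-bidder
single-item γ-hybrid auction with valuations `v₁ = 1` and `v₂ = v ≤ 1`: writing
`α = E[u₁]`, (i) for every `x ∈ [0,1)` the probability that bidder 2 bids below `x` is
at most `α/(1-x)`; (ii) if `v < 1` then `α ≥ 1 - v`.  Here `w b ∈ Fin 2` is the winner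
(the higher bidder, with an arbitrary fixed tie rule), who pays `γ` times their own bid
plus `(1-γ)` times the opponent's bid. -/
theorem cce_cdf_constraints_two_bidders
    (γ : ℝ) (hγ0 : 0 ≤ γ) (hγ1 : γ ≤ 1) (v : ℝ) (hv0 : 0 ≤ v) (hv1 : v ≤ 1)
    (w : ℝ≥0 × ℝ≥0 → Fin 2)
    (hw : ∀ b : ℝ≥0 × ℝ≥0, (w b = 0 → b.2 ≤ b.1) ∧ (w b = 1 → b.1 ≤ b.2))
    (u1 u2 : ℝ≥0 × ℝ≥0 → ℝ)
    (hu1 : ∀ b, u1 b = if w b = 0 then 1 - (γ * (b.1 : ℝ) + (1 - γ) * (b.2 : ℝ)) else 0)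
    (hu2 : ∀ b, u2 b = if w b = 1 then v - (γ * (b.2 : ℝ) + (1 - γ) * (b.1 : ℝ)) else 0)
    (μ : Measure (ℝ≥0 × ℝ≥0)) [IsProbabilityMeasure μ]
    (hNOB : ∀ᵐ b ∂μ, (b.1 : ℝ) ≤ 1 ∧ (b.2 : ℝ) ≤ v)
    (hInt1 : Integrable u1 μ) (hInt2 : Integrable u2 μ)
    (hIntdev1 : ∀ b' : ℝ≥0, Integrable (fun b : ℝ≥0 × ℝ≥0 => u1 (b', b.2)) μ)
    (hIntdev2 : ∀ b' : ℝ≥0, Integrable (fun b : ℝ≥0 × ℝ≥0 => u2 (b.1, b')) μ)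
    (hCCE1 : ∀ b' : ℝ≥0, (b' : ℝ) ≤ 1 →
      ∫ b, u1 (b', b.2) ∂μ ≤ ∫ b, u1 b ∂μ)
    (hCCE2 : ∀ b' : ℝ≥0, (b' : ℝ) ≤ v →
      ∫ b, u2 (b.1, b') ∂μ ≤ ∫ b, u2 b ∂μ)
    (α : ℝ) (hα : α = ∫ b, u1 b ∂μ) :
    (∀ x : ℝ, 0 ≤ x → x < 1 →
      (μ {b : ℝ≥0 × ℝ≥0 | (b.2 : ℝ) < x}).toReal ≤ α / (1 - x)) ∧
    (v < 1 → 1 - v ≤ α) :=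
  cce_cdf_constraints_two_bidders_general γ hγ1 v hv0 w hw u1 hu1 μ hNOB hIntdev1 hCCE1 α hα
end

section
/- Let 0 < v < 1, 0 < α ≤ 1, and 0 < β ≤ α·v (so β < α), and set θ := (α·v − β)/(α − β). Then ∫_0^{θ} (1 − β/(v−x)) dx + ∫_{θ}^{1−α} (1 − α/(1−x)) dx = α·ln((α−β)/(1−v)) + 1 − α + β·ln(β·(1−v)/(v·(α−β))). (Here the second integral is the signed integral from θ to 1−α; note θ < v and both θ and 1−α lie in [0,1).) -/
open MeasureTheory

theorem integral_one_sub_div_sub {a b c d : ℝ} (ha : a < d) (hb : b < d) :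
    ∫ x in a..b, (1 - c / (d - x)) = (b - a) - c * Real.log ((d - a) / (d - b)) := by
  have hd : ∀ x ∈ Set.uIcc a b, d - x ≠ 0 := fun x hx =>
    (sub_pos.2 (lt_of_le_of_lt hx.2 (max_lt ha hb))).ne'
  have hcont : ContinuousOn (fun x => c / (d - x)) (Set.uIcc a b) :=
    continuousOn_const.div (by fun_prop) hd
  have h0 : (0 : ℝ) ∉ Set.uIcc (d - b) (d - a) := fun h =>
    (lt_of_lt_of_le (lt_min (sub_pos.2 hb) (sub_pos.2 ha)) h.1).false
  rw [intervalIntegral.integral_sub intervalIntegrable_const hcont.intervalIntegrable]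
  simp only [div_eq_mul_inv c, intervalIntegral.integral_const_mul,
    intervalIntegral.integral_comp_sub_left (fun x : ℝ => x⁻¹) d, integral_inv h0,
    intervalIntegral.integral_const, smul_eq_mul, mul_one]

theorem crossing_integral_eval_general (v α β θ : ℝ)
    (hv0 : 0 < v) (hv1 : v < 1) (hα0 : 0 < α)
    (hβ0 : 0 < β) (hβ : β ≤ α * v)
    (hθ : θ = (α * v - β) / (α - β)) :
    (∫ x in (0:ℝ)..θ, (1 - β / (v - x))) + (∫ x in θ..(1 - α), (1 - α / (1 - x)))
      = α * Real.log ((α - β) / (1 - v)) + 1 - α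
        + β * Real.log (β * (1 - v) / (v * (α - β))) := by
  have hαβ : 0 < α - β := by nlinarith
  have hvθ : v - θ = β * (1 - v) / (α - β) := by
    rw [hθ]; field_simp; ring
  have h1θ : 1 - θ = α * (1 - v) / (α - β) := by
    rw [hθ]; field_simp; ring
  have hθv : θ < v := by
    have : 0 < v - θ := by rw [hvθ]; have := sub_pos.2 hv1; positivity
    linarith
  rw [integral_one_sub_div_sub hv0 hθv,
    integral_one_sub_div_sub (hθv.trans hv1) (by linarith : 1 - α < 1),
    sub_sub_cancel, sub_zero, sub_zero,
    show v / (v - θ) = (β * (1 - v) / (v * (α - β)))⁻¹ by rw [hvθ]; field_simp,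
    show (1 - θ) / α = ((α - β) / (1 - v))⁻¹ by rw [h1θ]; field_simp,
    Real.log_inv, Real.log_inv]
  ring

/-- Evaluation of the integral lower-bounding the expected highest bid in a two-bidder
coarse correlated equilibrium, in the case `β < v·α`, where
`θ = (αv - β)/(α - β)` is the crossing point of `β/(v-x)` and `α/(1-x)`:
`∫_0^θ (1 - β/(v-x)) dx + ∫_θ^{1-α} (1 - α/(1-x)) dx
  = α·ln((α-β)/(1-v)) + 1 - α + β·ln(β(1-v)/(v(α-β)))`. -/
theorem crossing_integral_eval (v α β θ : ℝ)
    (hv0 : 0 < v) (hv1 : v < 1) (hα0 : 0 < α) (hα1 : α ≤ 1)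
    (hβ0 : 0 < β) (hβ : β ≤ α * v)
    (hθ : θ = (α * v - β) / (α - β)) :
    (∫ x in (0:ℝ)..θ, (1 - β / (v - x))) + (∫ x in θ..(1 - α), (1 - α / (1 - x)))
      = α * Real.log ((α - β) / (1 - v)) + 1 - α
        + β * Real.log (β * (1 - v) / (v * (α - β))) :=
  crossing_integral_eval_general v α β θ hv0 hv1 hα0 hβ0 hβ hθ
end

section
/- Let γ ∈ (0,1) satisfy γ ≥ (1−γ)·e^{−1/(1−γ)}. Then for every α ∈ (0,1], every v with max(1−α, 0) < v ≤ 1 and v ≥ 1−α, and every β > 0: γ·(α + β + v) + (1−γ)·(1 + α·ln α + β·ln(β/v)) ≥ 1 − (1−γ)·(e^{−1/(1−γ)} + e^{−1−e^{−1/(1−γ)}}). -/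
lemma neg_exp_le_mul_log (t : ℝ) (ht : 0 < t) : -Real.exp (-1) ≤ t * Real.log t := by
  have h := Real.add_one_le_exp (-(1 + Real.log t))
  have he : Real.exp (-(1 + Real.log t)) = Real.exp (-1) / t := by
    rw [show -(1 + Real.log t) = -1 - Real.log t by ring, Real.exp_sub, Real.exp_log ht]
  rw [he] at h
  have h2 : (-(1 + Real.log t) + 1) * t ≤ Real.exp (-1) / t * t :=
    mul_le_mul_of_nonneg_right h ht.le
  have h3 : Real.exp (-1) / t * t = Real.exp (-1) := by field_simp
  nlinarith

lemma key_log (x m : ℝ) (hx : 0 < x) (hm : 0 < m) :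
    -(m * Real.exp (-1)) ≤ x * Real.log (x / m) := by
  have h := neg_exp_le_mul_log (x / m) (div_pos hx hm)
  have h2 := mul_le_mul_of_nonneg_left h hm.le
  have h3 : m * (x / m * Real.log (x / m)) = x * Real.log (x / m) := by
    field_simp
  nlinarith

/-- Welfare lower bound for two-bidder coarse correlated equilibria of the single-item
γ-hybrid auction without overbidding: if `γ ∈ (0,1)` satisfies
`γ ≥ (1-γ)·e^{-1/(1-γ)}`, then for every `α ∈ (0,1]`, every `v` with
`max(1-α,0) < v ≤ 1` and `v ≥ 1-α`, and every `β > 0`,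
`γ(α+β+v) + (1-γ)(1 + α ln α + β ln(β/v))
  ≥ 1 - (1-γ)(e^{-1/(1-γ)} + e^{-1-e^{-1/(1-γ)}})`. -/
theorem welfare_lower_bound_small_gamma (γ : ℝ) (hγ : γ ∈ Set.Ioo (0:ℝ) 1)
    (hγ2 : (1 - γ) * Real.exp (-1/(1 - γ)) ≤ γ) :
    ∀ α : ℝ, 0 < α → α ≤ 1 →
    ∀ v : ℝ, max (1 - α) 0 < v → v ≤ 1 → 1 - α ≤ v →
    ∀ β : ℝ, 0 < β →
      1 - (1 - γ) * (Real.exp (-1/(1 - γ)) + Real.exp (-1 - Real.exp (-1/(1 - γ))))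
        ≤ γ * (α + β + v) + (1 - γ) * (1 + α * Real.log α + β * Real.log (β / v)) := by
  obtain ⟨hγ0, hγ1⟩ := hγ
  intro α hα hα1 v hv hv1 hvα β hβ
  set c := 1 - γ with hcdef
  have hc : 0 < c := by rw [hcdef]; linarith
  have hv0 : 0 < v := lt_of_le_of_lt (le_max_right _ _) hv
  set E := Real.exp (-1 / c) with hE
  have hEpos : 0 < E := Real.exp_pos _
  -- β step: γβ + cβ log(β/v) ≥ -cvE
  have hm1 : 0 < v * Real.exp (-(γ / c)) := mul_pos hv0 (Real.exp_pos _)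
  have h1 := key_log β (v * Real.exp (-(γ / c))) hβ hm1
  have hlog1 : Real.log (β / (v * Real.exp (-(γ / c)))) = Real.log (β / v) + γ / c := by
    rw [show β / (v * Real.exp (-(γ / c))) = β / v * Real.exp (γ / c) by
      rw [Real.exp_neg]; field_simp]
    rw [Real.log_mul (by positivity) (Real.exp_ne_zero _), Real.log_exp]
  have hexp1 : v * Real.exp (-(γ / c)) * Real.exp (-1) = v * E := by
    rw [mul_assoc, ← Real.exp_add, hE]
    congr 2
    field_simp
    linarith [hcdef]
  rw [hlog1, hexp1] at h1
  have H1 : -(c * (v * E)) ≤ c * β * Real.log (β / v) + γ * β := by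
    have h := mul_le_mul_of_nonneg_left h1 hc.le
    have heq : c * (β * (Real.log (β / v) + γ / c)) = c * β * Real.log (β / v) + γ * β := by
      field_simp
    linarith [heq ▸ h]
  -- α step: α(log α + E) ≥ -exp(-1-E)
  have h2 := key_log α (Real.exp (-E)) hα (Real.exp_pos _)
  have hlog2 : Real.log (α / Real.exp (-E)) = Real.log α + E := by
    rw [Real.log_div hα.ne' (Real.exp_ne_zero _), Real.log_exp]; ring
  have hexp2 : Real.exp (-E) * Real.exp (-1) = Real.exp (-1 - E) := by
    rw [← Real.exp_add]; ring_nf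
  rw [hlog2, hexp2] at h2
  have H2 : -(c * Real.exp (-1 - E)) ≤ c * α * Real.log α + c * α * E := by
    have h := mul_le_mul_of_nonneg_left h2 hc.le
    nlinarith
  -- v step
  have hγE : 0 ≤ γ - c * E := by linarith
  have H3 : (1 - α) * (γ - c * E) ≤ v * (γ - c * E) :=
    mul_le_mul_of_nonneg_right hvα hγE
  have hsum : γ + c = 1 := by rw [hcdef]; ring
  clear_value E c
  nlinarith [H1, H2, H3, hsum]
end

section
/- Lambert-W optimization identity for the smoothness bound: Let γ ∈ [0,1) and set c := (2−γ)/(1−γ). Then there exists a unique real y > 1 with y − ln y = c; moreover, setting α := 1/(y − c), one has α > 0, e^{−1/α} = 1/y, and (1 + α − γ)/(α·(1 − e^{−1/α})) = (1−γ)·y. (Equivalently, y = −W_{−1}(−e^{−c}), so the optimized coarse correlated price of anarchy bound equals −(1−γ)·W_{−1}(−e^{−(2−γ)/(1−γ)}).) -/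
open Real Set

/-! `y - log y` increases strictly on `[1, ∞)`, so `y - log y = c` has exactly one root `y > 1`
for every `c > 1`, and `c = (2 - γ)/(1 - γ) > 1`. At the critical point `α = 1/(y - c) = 1/log y`
one has `e^{-1/α} = 1/y`, and the bound collapses to `(1 - γ) y` because the defining equation
reads `(1 - γ)(y - 1/α) = 2 - γ`. -/

lemma strictMonoOn_sub_log : StrictMonoOn (fun y : ℝ => y - log y) (Ici 1) := by
  intro a (ha : 1 ≤ a) b _ hab
  have ha0 : 0 < a := by linarith
  have hb0 : 0 < b := by linarith
  have hlog : log (b / a) < b / a - 1 :=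
    log_lt_sub_one_of_pos (by positivity) (by rw [Ne, div_eq_one_iff_eq ha0.ne']; exact hab.ne')
  have hratio : b / a - 1 ≤ b - a := by
    rw [div_sub_one ha0.ne']
    exact div_le_self (by linarith) ha
  rw [log_div (by positivity) ha0.ne'] at hlog
  show a - log a < b - log b
  linarith

lemma exists_one_lt_sub_log_eq {c : ℝ} (hc : 1 < c) : ∃ y, 1 < y ∧ y - log y = c := by
  have hcont : ContinuousOn (fun y : ℝ => y - log y) (Icc 1 (2 * c)) :=
    continuousOn_id.sub <| continuousOn_log.mono fun x hx => by
      simp only [mem_compl_iff, mem_singleton_iff]; linarith [hx.1]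
  have hlog_two_mul : log (2 * c) < c := by
    rw [log_mul two_ne_zero (by linarith)]
    linarith [log_le_sub_one_of_pos (by linarith : 0 < c),
      log_lt_sub_one_of_pos (two_pos : (0 : ℝ) < 2) (by norm_num)]
  obtain ⟨y, hy, hyc⟩ := intermediate_value_Ioc (by linarith) hcont
    (⟨by simpa using hc, by linarith⟩ : c ∈ Ioc (1 - log 1) (2 * c - log (2 * c)))
  exact ⟨y, hy.1, hyc⟩

lemma exp_neg_inv_inv_log {y : ℝ} (hy : 0 < y) : exp (-1 / (1 / log y)) = 1 / y := by
  rw [div_div_eq_mul_div, div_one, neg_one_mul, exp_neg, exp_log hy, one_div]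

lemma smoothness_bound_eq {γ α y : ℝ} (hα : 0 < α) (hy : 1 < y)
    (h : (1 - γ) * (y - 1 / α) = 2 - γ) :
    (1 + α - γ) / (α * (1 - 1 / y)) = (1 - γ) * y := by
  have hy1 : y - 1 ≠ 0 := by linarith
  field_simp at h ⊢
  linear_combination -h

theorem lambertW_optimization_general (γ c : ℝ) (hγ1 : γ < 1)
    (hc : c = (2 - γ) / (1 - γ)) :
    ∃ y : ℝ, (1 < y ∧ y - Real.log y = c) ∧
      (∀ y' : ℝ, 1 < y' → y' - Real.log y' = c → y' = y) ∧
      ∀ α : ℝ, α = 1 / (y - c) →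
        0 < α ∧ Real.exp (-1/α) = 1/y ∧
          (1 + α - γ) / (α * (1 - Real.exp (-1/α))) = (1 - γ) * y := by
  have hγ : 0 < 1 - γ := by linarith
  have hc1 : 1 < c := by rw [hc, lt_div_iff₀ hγ]; linarith
  have hγc : (1 - γ) * c = 2 - γ := by rw [hc]; field_simp
  obtain ⟨y, hy, hyc⟩ := exists_one_lt_sub_log_eq hc1
  refine ⟨y, ⟨hy, hyc⟩, fun y' hy' hy'c => ?_, fun α hα => ?_⟩
  · exact strictMonoOn_sub_log.injOn hy'.le hy.le (hy'c.trans hyc.symm)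
  have hαlog : α = 1 / log y := by rw [hα]; congr 1; linarith
  have hα0 : 0 < α := by rw [hαlog]; exact one_div_pos.2 (log_pos hy)
  have hexp : exp (-1 / α) = 1 / y := by rw [hαlog]; exact exp_neg_inv_inv_log (by linarith)
  refine ⟨hα0, hexp, ?_⟩
  rw [hexp]
  refine smoothness_bound_eq hα0 hy ?_
  rw [hαlog, one_div_one_div, hyc, hγc]

/-- Lambert-W optimization identity for the smoothness bound: for `γ ∈ [0,1)` and
`c = (2-γ)/(1-γ)` there is a unique `y > 1` with `y - ln y = c`; setting
`α = 1/(y - c)` one has `α > 0`, `e^{-1/α} = 1/y`, and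
`(1 + α - γ)/(α·(1 - e^{-1/α})) = (1-γ)·y`.  (Equivalently `y = -W₋₁(-e^{-c})`, so the
optimized coarse correlated price of anarchy bound equals
`-(1-γ)·W₋₁(-e^{-(2-γ)/(1-γ)})`.) -/
theorem lambertW_optimization (γ c : ℝ) (hγ0 : 0 ≤ γ) (hγ1 : γ < 1)
    (hc : c = (2 - γ) / (1 - γ)) :
    ∃ y : ℝ, (1 < y ∧ y - Real.log y = c) ∧
      (∀ y' : ℝ, 1 < y' → y' - Real.log y' = c → y' = y) ∧
      ∀ α : ℝ, α = 1 / (y - c) →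
        0 < α ∧ Real.exp (-1/α) = 1/y ∧
          (1 + α - γ) / (α * (1 - Real.exp (-1/α))) = (1 - γ) * y :=
  lambertW_optimization_general γ c hγ1 hc
end

section
/- Parametric coarse correlated price of anarchy bound for single-item γ-FPA without overbidding: Let γ ∈ [0,1), let α be a real with α ≥ γ and α > 0, let n ≥ 2, and let v : Fin n → ℝ≥0 be valuations. Consider a single-item γ-approximate first-price auction and let μ be any coarse correlated equilibrium under no overbidding with all utilities, payments and SW μ-integrable. Then max_i v_i ≤ ((1 + α − γ)/(α·(1 − e^{−1/α})))·E_{b∼μ}[SW(b)]. -/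
/-!
Let `i₀` be a bidder of maximal value `V`, let `G b` be the highest bid and `U = E[u_{i₀}]`.
Deviating to a constant bid `t < V` wins whenever `G b < t`, so the CCE condition gives
`(V - t) μ{G < t} ≤ U`. Integrating `μ{G ≥ t} ≥ 1 - U / (V - t)` over `t ∈ [0, T]` with
`T = (1 - e^{-1/α}) V` yields `E[G] ≥ T - U / α`. As `U ≤ E[SW] - γ E[G]` and, without
overbidding, `E[G] ≤ E[SW]`, we get `α T ≤ α E[G] + U ≤ (1 + α - γ) E[SW]`.
-/

open MeasureTheory
open scoped NNReal

theorem integral_inv_sub_of_lt {V T : ℝ} (hT0 : 0 ≤ T) (hTV : T < V) :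
    ∫ t in (0 : ℝ)..T, (V - t)⁻¹ = Real.log (V / (V - T)) := by
  rw [intervalIntegral.integral_comp_sub_left (fun x => x⁻¹), sub_zero,
    integral_inv_of_pos (by linarith) (by linarith)]

theorem log_div_sub_one_sub_exp_mul (c : ℝ) {V : ℝ} (hV : V ≠ 0) :
    Real.log (V / (V - (1 - Real.exp (-c)) * V)) = c := by
  rw [show V - (1 - Real.exp (-c)) * V = Real.exp (-c) * V by ring, div_mul_cancel_right₀ hV,
    Real.log_inv, Real.log_exp, neg_neg]

section TailBound

open Set

variable {Ω : Type*} [MeasurableSpace Ω] {μ : Measure Ω}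

theorem setIntegral_Ioc_measureReal_le_le_integral [IsFiniteMeasure μ] {f : Ω → ℝ}
    (hf : Integrable f μ) (hf0 : 0 ≤ᵐ[μ] f) {M : ℝ} (hM : 0 ≤ M) :
    ∫ t in Ioc 0 M, μ.real {x | t ≤ f x} ≤ ∫ x, f x ∂μ := by
  have hfM : Integrable (fun x => min (f x) M) μ := hf.inf (integrable_const M)
  calc ∫ t in Ioc 0 M, μ.real {x | t ≤ f x}
      = ∫ t in Ioc 0 M, μ.real {x | t ≤ min (f x) M} := by
        refine setIntegral_congr_fun measurableSet_Ioc fun t ht => ?_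
        simp only [le_min_iff, ht.2, and_true]
    _ = ∫ x, min (f x) M ∂μ := by
        refine (hfM.integral_eq_integral_Ioc_meas_le ?_ ?_).symm
        · filter_upwards [hf0] with x hx using le_min hx hM
        · exact Filter.Eventually.of_forall fun x => min_le_right _ _
    _ ≤ ∫ x, f x ∂μ := integral_mono hfM hf fun x => min_le_left _ _

theorem one_sub_measureReal_lt_le [IsProbabilityMeasure μ] (f : Ω → ℝ) (t : ℝ) :
    1 - μ.real {x | f x < t} ≤ μ.real {x | t ≤ f x} := by
  have h := measureReal_union_le (μ := μ) {x | t ≤ f x} {x | f x < t}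
  rw [show {x | t ≤ f x} ∪ {x | f x < t} = univ from
    eq_univ_of_forall fun x => le_or_gt t (f x), probReal_univ] at h
  linarith

theorem sub_mul_log_le_integral_of_tail_bound [IsProbabilityMeasure μ] {f : Ω → ℝ}
    (hf : Integrable f μ) (hf0 : 0 ≤ᵐ[μ] f) {U V T : ℝ} (hT0 : 0 ≤ T) (hTV : T < V)
    (htail : ∀ t ∈ Icc 0 T, (V - t) * μ.real {x | f x < t} ≤ U) :
    T - U * Real.log (V / (V - T)) ≤ ∫ x, f x ∂μ := by
  have hV : ∀ t ∈ Icc 0 T, 0 < V - t := fun t ht => by linarith [ht.2]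
  have hcont : ContinuousOn (fun t => (V - t)⁻¹) (uIcc 0 T) := by
    rw [uIcc_of_le hT0]
    exact (continuousOn_const.sub continuousOn_id).inv₀ fun t ht => (hV t ht).ne'
  have hint := hcont.intervalIntegrable (μ := volume)
  calc T - U * Real.log (V / (V - T))
      = ∫ t in (0 : ℝ)..T, (1 - U * (V - t)⁻¹) := by
        rw [intervalIntegral.integral_sub intervalIntegrable_const (hint.const_mul U),
          intervalIntegral.integral_const_mul, integral_inv_sub_of_lt hT0 hTV]
        simp
    _ ≤ ∫ t in (0 : ℝ)..T, μ.real {x | t ≤ f x} := by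
        refine intervalIntegral.integral_mono_on hT0
          (intervalIntegrable_const.sub (hint.const_mul U)) ?_ fun t ht => ?_
        · exact Antitone.intervalIntegrable fun s t hst =>
            measureReal_mono fun x hx => hst.trans hx
        · have h := htail t ht
          rw [← le_div_iff₀' (hV t ht), div_eq_mul_inv] at h
          linarith [one_sub_measureReal_lt_le (μ := μ) f t]
    _ = ∫ t in Ioc 0 T, μ.real {x | t ≤ f x} := intervalIntegral.integral_of_le hT0
    _ ≤ ∫ x, f x ∂μ := setIntegral_Ioc_measureReal_le_le_integral hf hf0 hT0

end TailBound

namespace FirstPriceAuction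

open Finset Function

variable {ι : Type*} {γ : ℝ} {v : ι → ℝ≥0} {w : (ι → ℝ≥0) → ι}
  {p : (ι → ℝ≥0) → ℝ} {u : ι → (ι → ℝ≥0) → ℝ}

theorem winner_bid_eq_sup [Fintype ι] (hw : ∀ (b : ι → ℝ≥0) i, b i ≤ b (w b))
    (b : ι → ℝ≥0) : b (w b) = univ.sup b :=
  le_antisymm (le_sup (mem_univ _)) (Finset.sup_le fun i _ => hw b i)

theorem winner_update_of_forall_lt [DecidableEq ι] (hw : ∀ (b : ι → ℝ≥0) i, b i ≤ b (w b))
    {b : ι → ℝ≥0} {y : ℝ≥0} (hb : ∀ j, b j < y) (i : ι) : w (update b i y) = i := by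
  by_contra hne
  have hi : y ≤ update b i y (w (update b i y)) := by
    simpa using hw (update b i y) i
  rw [update_of_ne hne] at hi
  exact (hb _).not_ge hi

theorem value_sub_bid_le_utility [DecidableEq ι] (hp : ∀ b, p b ≤ b (w b))
    (hu : ∀ i b, u i b = if i = w b then (v (w b) : ℝ) - p b else 0) {b : ι → ℝ≥0}
    {i : ι} (hi : w b = i) : (v i : ℝ) - b i ≤ u i b := by
  subst hi
  rw [hu, if_pos rfl]
  linarith [hp b]

theorem utility_nonneg [DecidableEq ι] (hp : ∀ b, p b ≤ b (w b))
    (hu : ∀ i b, u i b = if i = w b then (v (w b) : ℝ) - p b else 0) {b : ι → ℝ≥0}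
    {i : ι} (hbi : b i ≤ v i) : 0 ≤ u i b := by
  by_cases hi : w b = i
  · have : (b i : ℝ) ≤ v i := hbi
    linarith [value_sub_bid_le_utility hp hu hi]
  · simp [hu, Ne.symm hi]

theorem utility_le_welfare_sub [DecidableEq ι] (hγ1 : γ ≤ 1) (hp : ∀ b, γ * b (w b) ≤ p b)
    (hu : ∀ i b, u i b = if i = w b then (v (w b) : ℝ) - p b else 0) {b : ι → ℝ≥0}
    (hb : b (w b) ≤ v (w b)) (i : ι) : u i b ≤ v (w b) - γ * b (w b) := by
  rw [hu]
  split_ifs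
  · linarith [hp b]
  · have : (b (w b) : ℝ) ≤ v (w b) := hb
    linarith [mul_le_of_le_one_left (b (w b)).coe_nonneg hγ1]

theorem mul_measureReal_sup_lt_le_integral_utility_update [Fintype ι] [DecidableEq ι]
    {μ : Measure (ι → ℝ≥0)} [IsFiniteMeasure μ] (hw : ∀ (b : ι → ℝ≥0) i, b i ≤ b (w b))
    (hp : ∀ b, p b ≤ b (w b))
    (hu : ∀ i b, u i b = if i = w b then (v (w b) : ℝ) - p b else 0) {i : ι} {y : ℝ≥0}
    (hy : y ≤ v i) (hint : Integrable (fun b => u i (update b i y)) μ) :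
    (v i - y : ℝ) * μ.real {b | univ.sup b < y} ≤ ∫ b, u i (update b i y) ∂μ := by
  refine le_trans ?_ (mul_meas_ge_le_integral_of_nonneg
    (Filter.Eventually.of_forall fun b => utility_nonneg hp hu (by rwa [update_self]))
    hint (v i - y))
  refine mul_le_mul_of_nonneg_left (measureReal_mono fun b hb => ?_) (by simpa using hy)
  have hwin := winner_update_of_forall_lt hw (fun j => (le_sup (mem_univ j)).trans_lt hb) i
  simpa using value_sub_bid_le_utility hp hu hwin

section Expectation

variable [Fintype ι] {μ : Measure (ι → ℝ≥0)}

theorem ae_sup_le_welfare (hw : ∀ (b : ι → ℝ≥0) i, b i ≤ b (w b))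
    (hnob : ∀ᵐ b ∂μ, ∀ i, b i ≤ v i) : ∀ᵐ b ∂μ, ((univ.sup b : ℝ≥0) : ℝ) ≤ v (w b) := by
  filter_upwards [hnob] with b hb
  rw [← winner_bid_eq_sup hw]
  exact_mod_cast hb (w b)

theorem integrable_sup (hw : ∀ (b : ι → ℝ≥0) i, b i ≤ b (w b))
    (hnob : ∀ᵐ b ∂μ, ∀ i, b i ≤ v i) (hwelfare : Integrable (fun b => (v (w b) : ℝ)) μ) :
    Integrable (fun b => ((univ.sup b : ℝ≥0) : ℝ)) μ := by
  refine hwelfare.mono' (by fun_prop) ?_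
  filter_upwards [ae_sup_le_welfare hw hnob] with b hb
  rwa [Real.norm_of_nonneg (by positivity)]

theorem integral_utility_le_integral_welfare_sub [DecidableEq ι] (hγ1 : γ ≤ 1)
    (hw : ∀ (b : ι → ℝ≥0) i, b i ≤ b (w b)) (hp : ∀ b, γ * b (w b) ≤ p b)
    (hu : ∀ i b, u i b = if i = w b then (v (w b) : ℝ) - p b else 0)
    (hnob : ∀ᵐ b ∂μ, ∀ i, b i ≤ v i) {i : ι} (hui : Integrable (u i) μ)
    (hwelfare : Integrable (fun b => (v (w b) : ℝ)) μ) :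
    ∫ b, u i b ∂μ ≤ ∫ b, (v (w b) : ℝ) ∂μ - γ * ∫ b, ((univ.sup b : ℝ≥0) : ℝ) ∂μ := by
  have hG := (integrable_sup hw hnob hwelfare).const_mul γ
  rw [← integral_const_mul, ← integral_sub hwelfare hG]
  refine integral_mono_ae hui (hwelfare.sub hG) ?_
  filter_upwards [hnob] with b hb
  simpa [winner_bid_eq_sup hw] using utility_le_welfare_sub hγ1 hp hu (hb (w b)) i

end Expectation

end FirstPriceAuction

open Finset FirstPriceAuction in
theorem cce_poa_single_item_FPA_no_overbidding_general
    (γ : ℝ) (hγ1 : γ < 1)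
    (α : ℝ) (hαγ : γ ≤ α) (hα : 0 < α)
    (n : ℕ)
    (v : Fin n → ℝ≥0)
    (w : (Fin n → ℝ≥0) → Fin n)
    (hw : ∀ b, (∀ i, b i ≤ b (w b)) ∧ ∀ i, b i = b (w b) → w b ≤ i)
    (p : (Fin n → ℝ≥0) → ℝ)
    (hp : ∀ b, γ * (b (w b) : ℝ) ≤ p b ∧ p b ≤ (b (w b) : ℝ))
    (u : Fin n → (Fin n → ℝ≥0) → ℝ)
    (hu : ∀ i b, u i b = if i = w b then (v (w b) : ℝ) - p b else 0)
    (μ : Measure (Fin n → ℝ≥0)) [IsProbabilityMeasure μ]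
    (hNOB : ∀ᵐ b ∂μ, ∀ i, b i ≤ v i)
    (hIntu : ∀ i, Integrable (u i) μ)
    (hIntSW : Integrable (fun b => (v (w b) : ℝ)) μ)
    (hIntdev : ∀ i (b' : ℝ≥0), Integrable (fun b => u i (Function.update b i b')) μ)
    (hCCE : ∀ i (b' : ℝ≥0), b' ≤ v i →
      ∫ b, u i (Function.update b i b') ∂μ ≤ ∫ b, u i b ∂μ) :
    ((Finset.univ.sup v : ℝ≥0) : ℝ)
      ≤ ((1 + α - γ) / (α * (1 - Real.exp (-1/α)))) * ∫ b, (v (w b) : ℝ) ∂μ := by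
  obtain ⟨i₀, -, hi₀⟩ := exists_mem_eq_sup univ ⟨w 0, mem_univ _⟩ v
  have hw' := fun b => (hw b).1
  have hG := integrable_sup hw' hNOB hIntSW
  have hEG := integral_mono_ae hG hIntSW (ae_sup_le_welfare hw' hNOB)
  have hU := integral_utility_le_integral_welfare_sub hγ1.le hw' (fun b => (hp b).1) hu hNOB
    (hIntu i₀) hIntSW
  rw [hi₀, neg_div]
  have hexp : Real.exp (-(1 / α)) < 1 := Real.exp_lt_one_iff.mpr (neg_lt_zero.mpr (by positivity))
  rcases (v i₀).coe_nonneg.eq_or_lt with hV | hV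
  · rw [← hV]
    exact mul_nonneg (div_nonneg (by linarith) (mul_nonneg hα.le (by linarith)))
      (integral_nonneg fun b => (v (w b)).coe_nonneg)
  have hT : (1 - Real.exp (-(1 / α))) * v i₀ < v i₀ := by
    nlinarith [Real.exp_pos (-(1 / α))]
  have htail : ∀ t ∈ Set.Icc 0 ((1 - Real.exp (-(1 / α))) * v i₀),
      (v i₀ - t) * μ.real {b | ((univ.sup b : ℝ≥0) : ℝ) < t} ≤ ∫ b, u i₀ b ∂μ := by
    intro t ht
    have hy : t.toNNReal ≤ v i₀ := Real.toNNReal_le_iff_le_coe.mpr (ht.2.trans hT.le)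
    have hdev := mul_measureReal_sup_lt_le_integral_utility_update hw'
      (fun b => (hp b).2) hu hy (hIntdev i₀ _)
    simp only [Real.lt_toNNReal_iff_coe_lt, Real.coe_toNNReal _ ht.1] at hdev
    exact hdev.trans (hCCE i₀ _ hy)
  have hlayer := sub_mul_log_le_integral_of_tail_bound hG
    (Filter.Eventually.of_forall fun b => NNReal.coe_nonneg _) (by positivity) hT htail
  rw [log_div_sub_one_sub_exp_mul _ hV.ne'] at hlayer
  have hαU : α * ((∫ b, u i₀ b ∂μ) * (1 / α)) = ∫ b, u i₀ b ∂μ := by field_simp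
  rw [div_mul_eq_mul_div, le_div_iff₀ (mul_pos hα (by linarith))]
  linarith [mul_le_mul_of_nonneg_left hlayer hα.le,
    mul_le_mul_of_nonneg_left hEG (sub_nonneg.2 hαγ)]

/-- Parametric coarse correlated price of anarchy bound for the single-item
γ-approximate first-price auction without overbidding: for any real `α ≥ γ`, `α > 0`,
and any coarse correlated equilibrium `μ` supported on no-overbidding profiles, the
optimal welfare `max_i v_i` is at most `(1 + α - γ)/(α(1 - e^{-1/α}))` times the
expected welfare.  Here `w b` is the highest bidder (ties to the smallest index), the
winner pays some `p b` with `γ·b_{w b} ≤ p b ≤ b_{w b}`, the winner's utility is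
`v_{w b} - p b` and all other utilities are `0`; `SW b = v_{w b}`. -/
theorem cce_poa_single_item_FPA_no_overbidding
    (γ : ℝ) (hγ0 : 0 ≤ γ) (hγ1 : γ < 1)
    (α : ℝ) (hαγ : γ ≤ α) (hα : 0 < α)
    (n : ℕ) (hn : 2 ≤ n)
    (v : Fin n → ℝ≥0)
    (w : (Fin n → ℝ≥0) → Fin n)
    (hw : ∀ b, (∀ i, b i ≤ b (w b)) ∧ ∀ i, b i = b (w b) → w b ≤ i)
    (p : (Fin n → ℝ≥0) → ℝ)
    (hp : ∀ b, γ * (b (w b) : ℝ) ≤ p b ∧ p b ≤ (b (w b) : ℝ))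
    (u : Fin n → (Fin n → ℝ≥0) → ℝ)
    (hu : ∀ i b, u i b = if i = w b then (v (w b) : ℝ) - p b else 0)
    (μ : Measure (Fin n → ℝ≥0)) [IsProbabilityMeasure μ]
    (hNOB : ∀ᵐ b ∂μ, ∀ i, b i ≤ v i)
    (hIntu : ∀ i, Integrable (u i) μ) (hIntp : Integrable p μ)
    (hIntSW : Integrable (fun b => (v (w b) : ℝ)) μ)
    (hIntdev : ∀ i (b' : ℝ≥0), Integrable (fun b => u i (Function.update b i b')) μ)
    (hCCE : ∀ i (b' : ℝ≥0), b' ≤ v i →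
      ∫ b, u i (Function.update b i b') ∂μ ≤ ∫ b, u i b ∂μ) :
    ((Finset.univ.sup v : ℝ≥0) : ℝ)
      ≤ ((1 + α - γ) / (α * (1 - Real.exp (-1/α)))) * ∫ b, (v (w b) : ℝ) ∂μ :=
  cce_poa_single_item_FPA_no_overbidding_general γ hγ1 α hαγ hα n v w hw p hp u hu μ hNOB hIntu
    hIntSW hIntdev hCCE
end
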